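/- arXiv:2006.08856 — 3 statements merged into one kernel-verified Lean document; each statement's English description precedes it below -/
import Mathlib

section
/- Let μ(0) ∈ P(E) be supported in B(0, R₀) ⊂ E and suppose K satisfies (H) with constant L (with linear growth constant C). Then there exists T > 0 depending only on C and R₀ such that for any μ ∈ A_T (curves in C([0,T], P₁(E)) with μ(0) = μ_in and supp μ(t) ⊂ B(0, 2R₀) for all t), the map Γ(μ)(t) := (res[t]∘ext[μ])#μ(0) satisfies supp Γ(μ)(t) ⊂ B(0, 2R₀) for all t ∈ [0,T]. -/
/-!
Along the flow `ẋ = ∫ K(x, σ) dμ(t)(σ)`, the support bound `‖σ‖ ≤ 2R₀` for `μ(t)` and the linear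
growth of `K` give `‖ẋ‖ ≤ C (‖x‖ + 1 + 2R₀)` (with `C ≥ 1` after enlarging it), so by Grönwall a
trajectory started in `B(0, R₀)` stays below `(1 + 3R₀) e^{Ct} - (1 + 2R₀)`, which is `≤ 2R₀` as long
as `t ≤ log ((1 + 4R₀)/(1 + 3R₀)) / C`. A history `res[t] ∘ ext[μ](σ)` consists of values of `σ` and
of such trajectory points, so the push-forward of `μ(0)` is again supported in `B(0, 2R₀)`.
-/

open MeasureTheory Set

noncomputable section

abbrev Rd (d : ℕ) := EuclideanSpace ℝ (Fin d)

abbrev Hist (τ : ℝ) (d : ℕ) := C(Set.Icc (-τ) (0:ℝ), Rd d)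

noncomputable def W1 {X : Type*} [MeasurableSpace X] [PseudoMetricSpace X]
    (μ ν : Measure X) : ℝ :=
  sSup { r | ∃ φ : X → ℝ, LipschitzWith 1 φ ∧ r = (∫ x, φ x ∂μ) - ∫ x, φ x ∂ν }

/-- `G t` is the operator `res[t] ∘ ext[μ]` : it sends a history `σ ∈ E` to the
history at time `t` of the path extending `σ` by the flow `Tf` for positive times. -/
def IsResExt {d : ℕ} (τ : ℝ) (Tf : ℝ → Rd d → Rd d)
    (G : ℝ → Hist τ d → Hist τ d) : Prop :=
  ∀ t : ℝ, 0 ≤ t → ∀ σ : Hist τ d, ∀ s : Set.Icc (-τ) (0:ℝ),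
    (∀ s' : Set.Icc (-τ) (0:ℝ), (s':ℝ) = t + (s:ℝ) → G t σ s = σ s') ∧
    (0 < t + (s:ℝ) → ∀ z : Set.Icc (-τ) (0:ℝ), (z:ℝ) = 0 →
      G t σ s = Tf (t + (s:ℝ)) (σ z))

open Real

lemma gronwallBound_mul_eq (δ K M x : ℝ) :
    gronwallBound δ K (K * M) x = (δ + M) * exp (K * x) - M := by
  rcases eq_or_ne K 0 with rfl | hK
  · simp [gronwallBound_K0]
  · rw [gronwallBound_of_K_ne_0 hK, mul_div_cancel_left₀ _ hK]
    ring

lemma mul_exp_mul_le_of_le_log_div {K a b u : ℝ} (hK : 0 < K) (ha : 0 < a) (hb : 0 < b)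
    (hu : u ≤ log (b / a) / K) : a * exp (K * u) ≤ b := by
  have hKu : K * u ≤ log (b / a) := by rwa [le_div_iff₀ hK, mul_comm] at hu
  calc a * exp (K * u) ≤ a * (b / a) := by
        gcongr
        exact (exp_le_exp.mpr hKu).trans_eq (exp_log (div_pos hb ha))
    _ = b := mul_div_cancel₀ b ha.ne'

lemma norm_le_of_hasDerivWithinAt_of_norm_deriv_le {V : Type*} [NormedAddCommGroup V]
    [NormedSpace ℝ V] {f f' : ℝ → V} {K M R T : ℝ}
    (hf : ∀ s ∈ Icc 0 T, HasDerivWithinAt f (f' s) (Icc 0 T) s)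
    (hf' : ∀ s ∈ Icc 0 T, ‖f' s‖ ≤ K * (‖f s‖ + M)) (h0 : ‖f 0‖ ≤ R) :
    ∀ u ∈ Icc 0 T, ‖f u‖ ≤ (R + M) * exp (K * u) - M := by
  intro u hu
  have hcont : ContinuousOn f (Icc 0 T) := fun s hs => (hf s hs).continuousWithinAt
  have hright : ∀ s ∈ Ico 0 T, HasDerivWithinAt f (f' s) (Ici s) s := fun s hs =>
    (hf s (Ico_subset_Icc_self hs)).mono_of_mem_nhdsWithin (Icc_mem_nhdsGE_of_mem hs)
  have hbound : ∀ s ∈ Ico 0 T, ‖f' s‖ ≤ K * ‖f s‖ + K * M := fun s hs =>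
    (hf' s (Ico_subset_Icc_self hs)).trans_eq (mul_add _ _ _)
  simpa [gronwallBound_mul_eq] using
    norm_le_gronwallBound_of_norm_deriv_right_le hcont hright h0 hbound u hu

lemma norm_integral_le_of_norm_le_of_compl_closedBall_eq_zero {X V : Type*} [MeasurableSpace X]
    [SeminormedAddCommGroup X] [NormedAddCommGroup V] [NormedSpace ℝ V] {k : X → V} {C a r : ℝ}
    (hC : 0 ≤ C) (hk : ∀ σ, ‖k σ‖ ≤ C * (a + ‖σ‖)) (ν : Measure X) [IsProbabilityMeasure ν]
    (hν : ν (Metric.closedBall 0 r)ᶜ = 0) :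
    ‖∫ σ, k σ ∂ν‖ ≤ C * (a + r) := by
  have hball : ∀ᵐ σ ∂ν, σ ∈ Metric.closedBall (0 : X) r := ae_iff.mpr hν
  have hae : ∀ᵐ σ ∂ν, ‖k σ‖ ≤ C * (a + r) := by
    filter_upwards [hball] with σ hσ
    rw [mem_closedBall_zero_iff] at hσ
    exact (hk σ).trans (by gcongr)
  simpa using norm_integral_le_of_norm_le_const hae

lemma IsResExt.norm_apply_le {d : ℕ} {τ : ℝ} {Tf : ℝ → Rd d → Rd d}
    {G : ℝ → Hist τ d → Hist τ d} (hG : IsResExt τ Tf G) {t B : ℝ} (ht : 0 ≤ t)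
    {σ : Hist τ d} (hσ : ‖σ‖ ≤ B)
    (hflow : ∀ u ∈ Ioc 0 t, ∀ z : Icc (-τ) (0 : ℝ), (z : ℝ) = 0 → ‖Tf u (σ z)‖ ≤ B) :
    ‖G t σ‖ ≤ B := by
  refine (ContinuousMap.norm_le _ ((norm_nonneg σ).trans hσ)).mpr fun s => ?_
  obtain ⟨hs₁, hs₂⟩ := s.2
  rcases le_or_gt (t + s) 0 with hpast | hfuture
  · rw [(hG t ht σ s).1 ⟨t + s, by linarith, hpast⟩ rfl]
    exact (σ.norm_coe_le_norm _).trans hσ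
  · have hz : (0 : ℝ) ∈ Icc (-τ) 0 := ⟨by linarith, le_rfl⟩
    rw [(hG t ht σ s).2 hfuture ⟨0, hz⟩ rfl]
    exact hflow _ ⟨hfuture, by linarith⟩ _ rfl

lemma MeasureTheory.Measure.map_compl_eq_zero_of_mapsTo {α β : Type*} [MeasurableSpace α] [MeasurableSpace β]
    {μ : Measure α} {f : α → β} {s : Set α} {t : Set β} (hf : Measurable f)
    (ht : MeasurableSet t) (hst : MapsTo f s t) (hμ : μ sᶜ = 0) : μ.map f tᶜ = 0 := by
  rw [Measure.map_apply hf ht.compl]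
  exact measure_mono_null (fun x hx hxs => hx (hst hxs)) hμ

theorem stmt10_general {d : ℕ} (τ R₀ C : ℝ) (hR : 0 < R₀)
    [MeasurableSpace (Hist τ d)] [BorelSpace (Hist τ d)]
    (K : Rd d → Hist τ d → Rd d)
    (hgrowth : ∀ x σ, ‖K x σ‖ ≤ C * (1 + ‖x‖ + ‖σ‖))
    (μin : Measure (Hist τ d))
    (hμin : μin (Metric.closedBall (0 : Hist τ d) R₀)ᶜ = 0) :
    ∃ T : ℝ, 0 < T ∧
      ∀ (μ : ℝ → Measure (Hist τ d)) (Tf : ℝ → Rd d → Rd d)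
        (G : ℝ → Hist τ d → Hist τ d),
        (∀ t, IsProbabilityMeasure (μ t)) → μ 0 = μin →
        (∀ t ∈ Set.Icc (0:ℝ) T,
          (μ t) (Metric.closedBall (0 : Hist τ d) (2*R₀))ᶜ = 0) →
        (∀ t x, Integrable (fun σ => K x σ) (μ t)) →
        (∀ x, Tf 0 x = x) →
        (∀ x, ∀ t ∈ Set.Icc (0:ℝ) T,
          HasDerivWithinAt (fun s => Tf s x) (∫ σ, K (Tf t x) σ ∂(μ t))
            (Set.Icc (0:ℝ) T) t) →
        IsResExt τ Tf G →
        (∀ t, Measurable (G t)) →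
        ∀ t ∈ Set.Icc (0:ℝ) T,
          (μin.map (G t)) (Metric.closedBall (0 : Hist τ d) (2*R₀))ᶜ = 0 := by
  set C₁ := max C 1
  have hC₁ : 0 < C₁ := one_pos.trans_le (le_max_right _ _)
  have hgrowth₁ : ∀ x σ, ‖K x σ‖ ≤ C₁ * (1 + ‖x‖ + ‖σ‖) := fun x σ =>
    (hgrowth x σ).trans (by gcongr; exact le_max_left _ _)
  set T := log ((1 + 4 * R₀) / (1 + 3 * R₀)) / C₁
  refine ⟨T, div_pos (log_pos ((one_lt_div (by linarith)).mpr (by linarith))) hC₁, ?_⟩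
  intro μ Tf G hprob _ hsupp _ hTf0 hderiv hres hGmeas t ht
  have hflow : ∀ x : Rd d, ‖x‖ ≤ R₀ → ∀ u ∈ Icc 0 t, ‖Tf u x‖ ≤ 2 * R₀ := by
    intro x hx u hu
    have hu' : u ∈ Icc 0 T := ⟨hu.1, hu.2.trans ht.2⟩
    have hdrift : ∀ s ∈ Icc 0 T,
        ‖∫ σ, K (Tf s x) σ ∂(μ s)‖ ≤ C₁ * (‖Tf s x‖ + (1 + 2 * R₀)) := fun s hs =>
      (norm_integral_le_of_norm_le_of_compl_closedBall_eq_zero hC₁.le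
        (fun σ => hgrowth₁ (Tf s x) σ) (μ s) (hsupp s hs)).trans_eq (by ring)
    have hgron := norm_le_of_hasDerivWithinAt_of_norm_deriv_le (hderiv x) hdrift
      (show ‖Tf 0 x‖ ≤ R₀ by rwa [hTf0]) u hu'
    have hexp := mul_exp_mul_le_of_le_log_div hC₁ (by linarith : (0 : ℝ) < 1 + 3 * R₀)
      (by linarith : (0 : ℝ) < 1 + 4 * R₀) hu'.2
    linarith
  refine Measure.map_compl_eq_zero_of_mapsTo (hGmeas t) Metric.isClosed_closedBall.measurableSet
    (fun σ hσ => ?_) hμin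
  rw [mem_closedBall_zero_iff] at hσ ⊢
  exact hres.norm_apply_le ht.1 (by linarith) fun u hu z _ =>
    hflow _ ((σ.norm_coe_le_norm z).trans hσ) u (Ioc_subset_Icc_self hu)

theorem stmt10 {d : ℕ} (τ R₀ C : ℝ) (hτ : 0 < τ) (hR : 0 < R₀)
    [MeasurableSpace (Hist τ d)] [BorelSpace (Hist τ d)]
    (K : Rd d → Hist τ d → Rd d)
    (hgrowth : ∀ x σ, ‖K x σ‖ ≤ C * (1 + ‖x‖ + ‖σ‖))
    (μin : Measure (Hist τ d)) [IsProbabilityMeasure μin]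
    (hμin : μin (Metric.closedBall (0 : Hist τ d) R₀)ᶜ = 0) :
    ∃ T : ℝ, 0 < T ∧
      ∀ (μ : ℝ → Measure (Hist τ d)) (Tf : ℝ → Rd d → Rd d)
        (G : ℝ → Hist τ d → Hist τ d),
        (∀ t, IsProbabilityMeasure (μ t)) → μ 0 = μin →
        (∀ t ∈ Set.Icc (0:ℝ) T,
          (μ t) (Metric.closedBall (0 : Hist τ d) (2*R₀))ᶜ = 0) →
        (∀ t x, Integrable (fun σ => K x σ) (μ t)) →
        (∀ x, Tf 0 x = x) →
        (∀ x, ∀ t ∈ Set.Icc (0:ℝ) T,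
          HasDerivWithinAt (fun s => Tf s x) (∫ σ, K (Tf t x) σ ∂(μ t))
            (Set.Icc (0:ℝ) T) t) →
        IsResExt τ Tf G →
        (∀ t, Measurable (G t)) →
        ∀ t ∈ Set.Icc (0:ℝ) T,
          (μin.map (G t)) (Metric.closedBall (0 : Hist τ d) (2*R₀))ᶜ = 0 :=
  stmt10_general τ R₀ C hR K hgrowth μin hμin
end
end

section
/- Continuous dependence on initial data for the delayed mean-field dynamics: let μ_in, ν_in ∈ P(E) be supported in B(0,R₀), and let μ(t), ν(t) for t ≥ 0 be the unique solutions of the fixed-point equations μ(t) = (res[t]∘ext[μ])#μ_in and ν(t) = (res[t]∘ext[ν])#ν_in. Then W₁(μ(t), ν(t)) ≤ e^{Lt} W₁(μ_in, ν_in) + L e^{Lt} ∫₀ᵗ W₁(μ(r), ν(r)) dr, and consequently, by Gronwall, W₁(μ(t), ν(t)) ≤ r(t) W₁(μ_in, ν_in) for an explicit continuous increasing function r with r(0) = 1. -/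
/-!
By the fixed-point equations and the triangle inequality,
`W₁(μ t, ν t) ≤ W₁(Gμ t # μin, Gμ t # νin) + W₁(Gμ t # νin, Gν t # νin)`.
By Grönwall the flow of `F[μ]` is `e^{Lt}`-Lipschitz, hence so is `Gμ t`, which bounds the first
term by `e^{Lt} W₁(μin, νin)`. The second term is at most `sup_σ ‖Gμ t σ - Gν t σ‖`, i.e. the gap
between the two flows; their velocity fields `∫ K(·, σ) dμ r` and `∫ K(·, σ) dν r` differ by at most
`L W₁(μ r, ν r)` because `σ ↦ K(x, σ)` is `L`-Lipschitz, so a Grönwall estimate with forcing bounds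
the gap by `e^{Lt} ∫₀ᵗ L W₁(μ r, ν r) dr`. The integral Grönwall inequality then yields
`r(t) = e^{Lt} exp(L t e^{Lt})`. Underneath, on bounded time intervals all the measures involved
live in a common ball (so `W₁` is finite and Lipschitz test functions are integrable), and
`t ↦ W₁(μ t, ν t)` is continuous by dominated convergence, so that its integral is meaningful.
-/

open MeasureTheory Set

noncomputable section

/-- `μ` is the mean-field solution on `[0,∞)` with initial distribution `μin` supported in
`B(0,R₀)` : `Tf` is the flow of `F[μ]`, `G t = res[t] ∘ ext[μ]`, and `μ` satisfies the
fixed-point equation `μ(t) = (res[t] ∘ ext[μ]) # μin`. -/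
def IsFixedPointSol {d : ℕ} (τ R₀ : ℝ) [MeasurableSpace (Hist τ d)]
    (K : Rd d → Hist τ d → Rd d)
    (μin : Measure (Hist τ d)) (μ : ℝ → Measure (Hist τ d))
    (Tf : ℝ → Rd d → Rd d) (G : ℝ → Hist τ d → Hist τ d) : Prop :=
  (∀ t, IsProbabilityMeasure (μ t)) ∧ μ 0 = μin ∧
  μin (Metric.closedBall (0 : Hist τ d) R₀)ᶜ = 0 ∧
  (∀ t x, Integrable (fun σ => K x σ) (μ t)) ∧
  (∀ x, Tf 0 x = x) ∧
  (∀ x, ∀ t : ℝ, 0 ≤ t →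
    HasDerivWithinAt (fun s => Tf s x) (∫ σ, K (Tf t x) σ ∂(μ t)) (Set.Ici (0:ℝ)) t) ∧
  (∀ t, Measurable (G t)) ∧
  IsResExt τ Tf G ∧
  (∀ t : ℝ, 0 ≤ t → μ t = μin.map (G t))

open Filter Topology Metric Real

section Wasserstein

variable {X : Type*} [PseudoMetricSpace X] [MeasurableSpace X]

theorem W1_nonneg (μ ν : Measure X) : 0 ≤ W1 μ ν := by
  by_cases h : BddAbove {r | ∃ φ : X → ℝ, LipschitzWith 1 φ ∧ r = (∫ x, φ x ∂μ) - ∫ x, φ x ∂ν}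
  · exact le_csSup h ⟨fun _ => 0, LipschitzWith.const' 0, by simp⟩
  · exact (Real.sSup_of_not_bddAbove h).ge

theorem W1_comm (μ ν : Measure X) : W1 μ ν = W1 ν μ := by
  suffices ∀ μ ν : Measure X,
      {r | ∃ φ : X → ℝ, LipschitzWith 1 φ ∧ r = (∫ x, φ x ∂μ) - ∫ x, φ x ∂ν} ⊆
        {r | ∃ φ : X → ℝ, LipschitzWith 1 φ ∧ r = (∫ x, φ x ∂ν) - ∫ x, φ x ∂μ} from
    congrArg sSup (this μ ν |>.antisymm (this ν μ))
  rintro μ ν _ ⟨φ, hφ, rfl⟩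
  exact ⟨-φ, hφ.neg, by simp only [Pi.neg_apply, integral_neg]; ring⟩

theorem W1_le {μ ν : Measure X} {B : ℝ}
    (h : ∀ φ : X → ℝ, LipschitzWith 1 φ → (∫ x, φ x ∂μ) - ∫ x, φ x ∂ν ≤ B) : W1 μ ν ≤ B :=
  csSup_le ⟨0, fun _ => 0, LipschitzWith.const' 0, by simp⟩ (by rintro _ ⟨φ, hφ, rfl⟩; exact h φ hφ)

variable [OpensMeasurableSpace X] {Y : Type*} [PseudoMetricSpace Y] [MeasurableSpace Y]
  [OpensMeasurableSpace Y] {μ ν ρ : Measure X} {x₀ : X} {R : ℝ}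

theorem LipschitzWith.integrable_of_ae_mem_closedBall [IsFiniteMeasure μ]
    (hμ : ∀ᵐ x ∂μ, x ∈ closedBall x₀ R) {φ : X → ℝ} {c : NNReal} (hφ : LipschitzWith c φ) :
    Integrable φ μ := by
  refine .mono' (integrable_const (|φ x₀| + c * R)) hφ.continuous.aestronglyMeasurable ?_
  filter_upwards [hμ] with x hx
  have := hφ.dist_le_mul x x₀
  rw [Real.dist_eq] at this
  have := mul_le_mul_of_nonneg_left (mem_closedBall.1 hx) c.coe_nonneg
  rw [Real.norm_eq_abs]
  linarith [abs_sub_abs_le_abs_sub (φ x) (φ x₀)]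

theorem abs_integral_sub_le_of_ae_mem_closedBall [IsProbabilityMeasure μ]
    (hμ : ∀ᵐ x ∂μ, x ∈ closedBall x₀ R) {φ : X → ℝ} (hφ : LipschitzWith 1 φ) :
    |(∫ x, φ x ∂μ) - φ x₀| ≤ R := by
  have hsub : ∫ x, (φ x - φ x₀) ∂μ = (∫ x, φ x ∂μ) - φ x₀ := by
    rw [integral_sub (hφ.integrable_of_ae_mem_closedBall hμ) (integrable_const _)]
    simp
  rw [← hsub, ← Real.norm_eq_abs]
  calc ‖∫ x, (φ x - φ x₀) ∂μ‖ ≤ R * μ.real univ := by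
        refine norm_integral_le_of_norm_le_const ?_
        filter_upwards [hμ] with x hx
        simpa [← Real.dist_eq] using (hφ.dist_le_mul x x₀).trans (by simpa using hx)
    _ = R := by simp

theorem integral_sub_integral_le_W1 [IsProbabilityMeasure μ] [IsProbabilityMeasure ν]
    (hμ : ∀ᵐ x ∂μ, x ∈ closedBall x₀ R) (hν : ∀ᵐ x ∂ν, x ∈ closedBall x₀ R)
    {φ : X → ℝ} (hφ : LipschitzWith 1 φ) : (∫ x, φ x ∂μ) - ∫ x, φ x ∂ν ≤ W1 μ ν := by
  refine le_csSup ⟨2 * R, ?_⟩ ⟨φ, hφ, rfl⟩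
  rintro _ ⟨ψ, hψ, rfl⟩
  have h₁ := abs_le.1 (abs_integral_sub_le_of_ae_mem_closedBall hμ hψ)
  have h₂ := abs_le.1 (abs_integral_sub_le_of_ae_mem_closedBall hν hψ)
  linarith [h₁.2, h₂.1]

theorem integral_sub_integral_le_mul_W1 [IsProbabilityMeasure μ] [IsProbabilityMeasure ν]
    (hμ : ∀ᵐ x ∂μ, x ∈ closedBall x₀ R) (hν : ∀ᵐ x ∂ν, x ∈ closedBall x₀ R)
    {φ : X → ℝ} {c : ℝ} (hc : 0 < c) (hφ : ∀ x y, dist (φ x) (φ y) ≤ c * dist x y) :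
    (∫ x, φ x ∂μ) - ∫ x, φ x ∂ν ≤ c * W1 μ ν := by
  have hψ : LipschitzWith 1 fun x => c⁻¹ * φ x := .of_dist_le_mul fun x y => by
    rw [Real.dist_eq, ← mul_sub, abs_mul, abs_of_pos (inv_pos.2 hc), NNReal.coe_one, one_mul,
      inv_mul_le_iff₀ hc, ← Real.dist_eq]
    exact hφ x y
  have := integral_sub_integral_le_W1 hμ hν hψ
  rw [integral_const_mul, integral_const_mul, ← mul_sub, inv_mul_le_iff₀ hc] at this
  exact this

theorem W1_le_add [IsProbabilityMeasure μ] [IsProbabilityMeasure ν] [IsProbabilityMeasure ρ]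
    (hμ : ∀ᵐ x ∂μ, x ∈ closedBall x₀ R) (hν : ∀ᵐ x ∂ν, x ∈ closedBall x₀ R)
    (hρ : ∀ᵐ x ∂ρ, x ∈ closedBall x₀ R) : W1 μ ρ ≤ W1 μ ν + W1 ν ρ :=
  W1_le fun φ hφ => by
    linarith [integral_sub_integral_le_W1 hμ hν hφ, integral_sub_integral_le_W1 hν hρ hφ]

theorem abs_W1_sub_W1_le {μ' ν' : Measure X} [IsProbabilityMeasure μ] [IsProbabilityMeasure ν]
    [IsProbabilityMeasure μ'] [IsProbabilityMeasure ν']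
    (hμ : ∀ᵐ x ∂μ, x ∈ closedBall x₀ R) (hν : ∀ᵐ x ∂ν, x ∈ closedBall x₀ R)
    (hμ' : ∀ᵐ x ∂μ', x ∈ closedBall x₀ R) (hν' : ∀ᵐ x ∂ν', x ∈ closedBall x₀ R) :
    |W1 μ' ν' - W1 μ ν| ≤ W1 μ' μ + W1 ν' ν := by
  have h₁ := W1_le_add hμ' hμ hν'
  have h₂ := W1_le_add hμ hν hν'
  have h₃ := W1_le_add hμ hμ' hν
  have h₄ := W1_le_add hμ' hν' hν
  rw [W1_comm ν ν'] at h₂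
  rw [W1_comm μ μ'] at h₃
  rw [abs_sub_le_iff]
  constructor <;> linarith

theorem norm_integral_sub_integral_le_mul_W1 {E : Type*} [NormedAddCommGroup E]
    [NormedSpace ℝ E] [CompleteSpace E] [IsProbabilityMeasure μ] [IsProbabilityMeasure ν]
    (hμ : ∀ᵐ x ∂μ, x ∈ closedBall x₀ R) (hν : ∀ᵐ x ∂ν, x ∈ closedBall x₀ R)
    {F : X → E} {c : ℝ} (hc : 0 < c) (hF : ∀ x y, dist (F x) (F y) ≤ c * dist x y)
    (hFμ : Integrable F μ) (hFν : Integrable F ν) :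
    ‖(∫ x, F x ∂μ) - ∫ x, F x ∂ν‖ ≤ c * W1 μ ν := by
  set v := (∫ x, F x ∂μ) - ∫ x, F x ∂ν
  by_cases hv : ‖v‖ = 0
  · rw [hv]; exact mul_nonneg hc.le (W1_nonneg μ ν)
  obtain ⟨g, hg, hgv⟩ := exists_dual_vector ℝ v hv
  calc ‖v‖ = g v := by simpa using hgv.symm
    _ = (∫ x, g (F x) ∂μ) - ∫ x, g (F x) ∂ν := by
      rw [map_sub, ← g.integral_comp_comm hFμ, ← g.integral_comp_comm hFν]
    _ ≤ c * W1 μ ν := integral_sub_integral_le_mul_W1 hμ hν hc fun x y =>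
      (g.lipschitz.dist_le_mul _ _).trans (by rw [coe_nnnorm, hg, one_mul]; exact hF x y)

theorem W1_map_le_mul [IsProbabilityMeasure μ] [IsProbabilityMeasure ν]
    (hμ : ∀ᵐ x ∂μ, x ∈ closedBall x₀ R) (hν : ∀ᵐ x ∂ν, x ∈ closedBall x₀ R)
    {G : X → Y} (hGm : Measurable G) {c : ℝ} (hc : 0 < c)
    (hG : ∀ x y, dist (G x) (G y) ≤ c * dist x y) :
    W1 (μ.map G) (ν.map G) ≤ c * W1 μ ν :=
  W1_le fun φ hφ => by
    rw [integral_map hGm.aemeasurable hφ.continuous.aestronglyMeasurable,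
      integral_map hGm.aemeasurable hφ.continuous.aestronglyMeasurable]
    exact integral_sub_integral_le_mul_W1 hμ hν hc fun x y =>
      (hφ.dist_le_mul _ _).trans (by simpa using hG x y)

theorem tendsto_W1_of_tendsto {ι : Type*} {l : Filter ι} {μ' ν' : ι → Measure X}
    [∀ i, IsProbabilityMeasure (μ' i)] [∀ i, IsProbabilityMeasure (ν' i)]
    [IsProbabilityMeasure μ] [IsProbabilityMeasure ν]
    (hC : ∀ᶠ i in l, (∀ᵐ x ∂μ' i, x ∈ closedBall x₀ R) ∧ ∀ᵐ x ∂ν' i, x ∈ closedBall x₀ R)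
    (hμ : ∀ᵐ x ∂μ, x ∈ closedBall x₀ R) (hν : ∀ᵐ x ∂ν, x ∈ closedBall x₀ R)
    (hμ' : Tendsto (fun i => W1 (μ' i) μ) l (𝓝 0)) (hν' : Tendsto (fun i => W1 (ν' i) ν) l (𝓝 0)) :
    Tendsto (fun i => W1 (μ' i) (ν' i)) l (𝓝 (W1 μ ν)) := by
  rw [← tendsto_sub_nhds_zero_iff]
  refine squeeze_zero_norm' (hC.mono fun i hi => ?_) (by simpa using hμ'.add hν')
  exact abs_W1_sub_W1_le hμ hν hi.1 hi.2

end Wasserstein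

section PushforwardContinuity

variable {X Y : Type*} [MeasurableSpace X] [PseudoMetricSpace Y] [MeasurableSpace Y]
  [OpensMeasurableSpace Y] [SecondCountableTopology Y] {μ : Measure X} {y₀ : Y} {C : ℝ}

theorem W1_map_le_integral_dist [IsProbabilityMeasure μ]
    {G₁ G₂ : X → Y} (hG₁ : Measurable G₁) (hG₂ : Measurable G₂)
    (h₁ : ∀ᵐ x ∂μ, G₁ x ∈ closedBall y₀ C) (h₂ : ∀ᵐ x ∂μ, G₂ x ∈ closedBall y₀ C) :
    W1 (μ.map G₁) (μ.map G₂) ≤ ∫ x, dist (G₁ x) (G₂ x) ∂μ := by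
  have hint : ∀ {G : X → Y}, Measurable G → (∀ᵐ x ∂μ, G x ∈ closedBall y₀ C) →
      ∀ {φ : Y → ℝ}, LipschitzWith 1 φ → Integrable (fun x => φ (G x)) μ :=
    fun hG h _ hφ => (hφ.integrable_of_ae_mem_closedBall
      ((ae_map_iff hG.aemeasurable measurableSet_closedBall).2 h)).comp_measurable hG
  have hdist : Integrable (fun x => dist (G₁ x) (G₂ x)) μ := by
    refine .mono' (integrable_const (C + C)) (hG₁.dist hG₂).aestronglyMeasurable ?_
    filter_upwards [h₁, h₂] with x hx₁ hx₂
    rw [Real.norm_of_nonneg dist_nonneg]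
    exact dist_le_add_of_nonempty_closedBall_inter_closedBall
      ⟨y₀, mem_closedBall_comm.1 hx₁, mem_closedBall_comm.1 hx₂⟩
  refine W1_le fun φ hφ => ?_
  rw [integral_map hG₁.aemeasurable hφ.continuous.aestronglyMeasurable,
    integral_map hG₂.aemeasurable hφ.continuous.aestronglyMeasurable,
    ← integral_sub (hint hG₁ h₁ hφ) (hint hG₂ h₂ hφ)]
  refine integral_mono ((hint hG₁ h₁ hφ).sub (hint hG₂ h₂ hφ)) hdist fun x => ?_
  simpa [Real.dist_eq] using (le_abs_self _).trans (hφ.dist_le_mul (G₁ x) (G₂ x))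

theorem tendsto_W1_map [IsProbabilityMeasure μ] {ι : Type*}
    {l : Filter ι} [l.IsCountablyGenerated] {G : ι → X → Y} {g : X → Y}
    (hG : ∀ i, Measurable (G i)) (hg : Measurable g)
    (hGC : ∀ᶠ i in l, ∀ᵐ x ∂μ, G i x ∈ closedBall y₀ C) (hgC : ∀ᵐ x ∂μ, g x ∈ closedBall y₀ C)
    (hlim : ∀ x, Tendsto (G · x) l (𝓝 (g x))) :
    Tendsto (fun i => W1 (μ.map (G i)) (μ.map g)) l (𝓝 0) := by
  have hint : Tendsto (fun i => ∫ x, dist (G i x) (g x) ∂μ) l (𝓝 0) := by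
    simpa using tendsto_integral_filter_of_dominated_convergence (fun _ => C + C)
      (.of_forall fun i => ((hG i).dist hg).aestronglyMeasurable)
      (hGC.mono fun i hi => by
        filter_upwards [hi, hgC] with x hx₁ hx₂
        rw [Real.norm_of_nonneg dist_nonneg]
        exact dist_le_add_of_nonempty_closedBall_inter_closedBall
          ⟨y₀, mem_closedBall_comm.1 hx₁, mem_closedBall_comm.1 hx₂⟩)
      (integrable_const _) (ae_of_all _ fun x => (hlim x).dist tendsto_const_nhds)
  exact squeeze_zero' (.of_forall fun _ => W1_nonneg _ _)
    (hGC.mono fun i hi => W1_map_le_integral_dist (hG i) hg hi hgC) hint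

end PushforwardContinuity

section Gronwall

variable {E : Type*} [NormedAddCommGroup E] [NormedSpace ℝ E]

theorem norm_le_exp_mul_integral_of_norm_deriv_right_le {f f' : ℝ → E} {F : ℝ → ℝ} {L b : ℝ}
    (hL : 0 ≤ L) (hF : Continuous F) (hF₀ : ∀ u, 0 ≤ F u) (hf : ContinuousOn f (Icc 0 b))
    (hf' : ∀ u ∈ Ico 0 b, HasDerivWithinAt f (f' u) (Ici u) u) (hf₀ : f 0 = 0)
    (bound : ∀ u ∈ Ico 0 b, ‖f' u‖ ≤ L * ‖f u‖ + F u) :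
    ∀ r ∈ Icc 0 b, ‖f r‖ ≤ exp (L * r) * ∫ u in (0:ℝ)..r, F u := by
  set I : ℝ → ℝ := fun r => ∫ u in (0:ℝ)..r, F u
  have hI : ∀ u, HasDerivAt I (F u) u := fun u =>
    intervalIntegral.integral_hasDerivAt_right (hF.intervalIntegrable _ _)
      hF.aestronglyMeasurable.stronglyMeasurableAtFilter hF.continuousAt
  -- the `η * (u + 1)` term makes the barrier's slope strictly exceed the bound on `‖f'‖`
  have barrier : ∀ η > 0, ∀ r ∈ Icc 0 b, ‖f r‖ ≤ exp (L * r) * (I r + η * (r + 1)) := by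
    intro η hη
    refine image_norm_le_of_norm_deriv_right_lt_deriv_boundary hf hf' (by simp [I, hf₀, hη.le])
      (B' := fun u => L * (exp (L * u) * (I u + η * (u + 1))) + exp (L * u) * (F u + η))
      (fun u => ?_) fun u hu hfu => ?_
    · exact (((hasDerivAt_id u).const_mul L).exp.mul
        ((hI u).add (((hasDerivAt_id u).add_const 1).const_mul η))).congr_deriv
          (by simp only [id, Pi.add_apply]; ring)
    · have h₁ : F u ≤ exp (L * u) * F u :=
        le_mul_of_one_le_left (hF₀ u) (one_le_exp (mul_nonneg hL hu.1))
      have h₂ := mul_pos (exp_pos (L * u)) hη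
      calc ‖f' u‖ ≤ L * ‖f u‖ + F u := bound u hu
        _ < _ := by rw [hfu]; linarith
  intro r hr
  refine le_of_forall_pos_le_add fun ε hε => ?_
  have hr₁ : 0 < r + 1 := by linarith [hr.1]
  calc ‖f r‖ ≤ exp (L * r) * (I r + ε / (exp (L * r) * (r + 1)) * (r + 1)) :=
        barrier _ (by positivity) r hr
    _ = exp (L * r) * I r + ε := by field_simp

theorem le_mul_exp_of_le_add_mul_integral {F : ℝ → ℝ} {α β T : ℝ} (hβ : 0 ≤ β)
    (hF : Continuous F) (hT : 0 ≤ T) (h : ∀ t ∈ Icc 0 T, F t ≤ α + β * ∫ u in (0:ℝ)..t, F u) :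
    F T ≤ α * exp (β * T) := by
  set I : ℝ → ℝ := fun t => ∫ u in (0:ℝ)..t, F u
  have hI : ∀ u, HasDerivAt I (F u) u := fun u =>
    intervalIntegral.integral_hasDerivAt_right (hF.intervalIntegrable _ _)
      hF.aestronglyMeasurable.stronglyMeasurableAtFilter hF.continuousAt
  have hIT := le_gronwallBound_of_liminf_deriv_right_le (f := I) (δ := 0) (K := β) (ε := α)
    (a := 0) (b := T)
    (fun u _ => (hI u).continuousAt.continuousWithinAt)
    (fun u _ _ hr => (hI u).hasDerivWithinAt.liminf_right_slope_le hr) (by simp [I])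
    (fun t ht => by linarith [h t (Ico_subset_Icc_self ht)]) T ⟨hT, le_rfl⟩
  rcases hβ.eq_or_lt with rfl | hβ
  · simpa using h T ⟨hT, le_rfl⟩
  simp only [gronwallBound_of_K_ne_0 hβ.ne', sub_zero, zero_mul, zero_add] at hIT
  calc F T ≤ α + β * I T := h T ⟨hT, le_rfl⟩
    _ ≤ α + β * (α / β * (exp (β * T) - 1)) := by gcongr
    _ = α * exp (β * T) := by field_simp; ring

variable {v w T S : ℝ → E → E} {L : ℝ}

theorem dist_flow_le (hL : 0 ≤ L) (hv : ∀ t y y', ‖v t y - v t y'‖ ≤ L * ‖y - y'‖)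
    (hT : ∀ x, ∀ t, 0 ≤ t → HasDerivWithinAt (T · x) (v t (T t x)) (Ici 0) t)
    {t : ℝ} (ht : 0 ≤ t) (x y : E) :
    dist (T t x) (T t y) ≤ exp (L * t) * dist (T 0 x) (T 0 y) := by
  have hlip : ∀ t, LipschitzWith L.toNNReal (v t) := fun t =>
    .of_dist_le_mul fun y y' => by
      rw [Real.coe_toNNReal _ hL, dist_eq_norm, dist_eq_norm]; exact hv t y y'
  have hcont : ∀ x, ContinuousOn (T · x) (Icc 0 t) := fun x u hu =>
    (hT x u hu.1).continuousWithinAt.mono Icc_subset_Ici_self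
  have := dist_le_of_trajectories_ODE hlip (hcont x)
    (fun u hu => (hT x u hu.1).mono (Ici_subset_Ici.2 hu.1)) (hcont y)
    (fun u hu => (hT y u hu.1).mono (Ici_subset_Ici.2 hu.1)) le_rfl t ⟨ht, le_rfl⟩
  rwa [Real.coe_toNNReal _ hL, sub_zero, mul_comm] at this

theorem norm_flow_sub_flow_le {F : ℝ → ℝ} (hL : 0 ≤ L)
    (hv : ∀ t y y', ‖v t y - v t y'‖ ≤ L * ‖y - y'‖)
    (hvw : ∀ t, 0 ≤ t → ∀ y, ‖v t y - w t y‖ ≤ F t) (hF : Continuous F) (hF₀ : ∀ u, 0 ≤ F u)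
    {x : E} (hT : ∀ t, 0 ≤ t → HasDerivWithinAt (T · x) (v t (T t x)) (Ici 0) t)
    (hS : ∀ t, 0 ≤ t → HasDerivWithinAt (S · x) (w t (S t x)) (Ici 0) t) (h₀ : T 0 x = S 0 x)
    {t : ℝ} (ht : 0 ≤ t) :
    ‖T t x - S t x‖ ≤ exp (L * t) * ∫ u in (0:ℝ)..t, F u := by
  refine norm_le_exp_mul_integral_of_norm_deriv_right_le hL hF hF₀
    (f := fun u => T u x - S u x) (f' := fun u => v u (T u x) - w u (S u x))
    (fun u hu => ((hT u hu.1).sub (hS u hu.1)).continuousWithinAt.mono Icc_subset_Ici_self)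
    (fun u hu => ((hT u hu.1).sub (hS u hu.1)).mono (Ici_subset_Ici.2 hu.1))
    (sub_eq_zero.2 h₀) (fun u hu => ?_) t ⟨ht, le_rfl⟩
  calc ‖v u (T u x) - w u (S u x)‖
      ≤ ‖v u (T u x) - v u (S u x)‖ + ‖v u (S u x) - w u (S u x)‖ :=
        norm_sub_le_norm_sub_add_norm_sub _ _ _
    _ ≤ L * ‖T u x - S u x‖ + F u := add_le_add (hv u _ _) (hvw u hu.1 _)

end Gronwall

section ResExt

variable {d : ℕ} {τ : ℝ} {Tf Tf' : ℝ → Rd d → Rd d} {G G' : ℝ → Hist τ d → Hist τ d} {t : ℝ}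

theorem IsResExt.dist_le (h : IsResExt τ Tf G) (h' : IsResExt τ Tf' G') (ht : 0 ≤ t)
    (σ σ' : Hist τ d) {B : ℝ} (hB : 0 ≤ B) (hpast : ∀ s, dist (σ s) (σ' s) ≤ B)
    (hfuture : ∀ r ∈ Ioc 0 t, ∀ z : Icc (-τ) (0:ℝ), (z : ℝ) = 0 →
      dist (Tf r (σ z)) (Tf' r (σ' z)) ≤ B) :
    dist (G t σ) (G' t σ') ≤ B := by
  refine (ContinuousMap.dist_le hB).2 fun s => ?_
  rcases le_or_gt (t + s) 0 with hs | hs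
  · have hmem : t + (s : ℝ) ∈ Icc (-τ) 0 := ⟨by linarith [s.2.1], hs⟩
    rw [(h t ht σ s).1 ⟨_, hmem⟩ rfl, (h' t ht σ' s).1 ⟨_, hmem⟩ rfl]
    exact hpast _
  · have hz : (0:ℝ) ∈ Icc (-τ) 0 := ⟨by linarith [s.2.1, s.2.2], le_rfl⟩
    rw [(h t ht σ s).2 hs ⟨0, hz⟩ rfl, (h' t ht σ' s).2 hs ⟨0, hz⟩ rfl]
    exact hfuture _ ⟨hs, by linarith [s.2.2]⟩ _ rfl

theorem IsResExt.dist_le_mul {L : ℝ} (h : IsResExt τ Tf G) (hL : 0 ≤ L)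
    (hTf : ∀ r, 0 ≤ r → ∀ x y, dist (Tf r x) (Tf r y) ≤ exp (L * r) * dist x y) (ht : 0 ≤ t)
    (σ σ' : Hist τ d) : dist (G t σ) (G t σ') ≤ exp (L * t) * dist σ σ' := by
  refine h.dist_le h ht σ σ' (by positivity) (fun s => ?_) fun r hr z _ => ?_
  · exact (ContinuousMap.dist_apply_le_dist s).trans
      (le_mul_of_one_le_left dist_nonneg (one_le_exp (mul_nonneg hL ht)))
  · exact (hTf r hr.1.le _ _).trans (mul_le_mul (exp_le_exp.2 (by nlinarith [hr.2]))
      (ContinuousMap.dist_apply_le_dist z) dist_nonneg (exp_pos _).le)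

theorem IsResExt.continuousOn (h : IsResExt τ Tf G) (hτ : 0 ≤ τ) (hTf₀ : ∀ x, Tf 0 x = x)
    (hTf : ∀ x, ContinuousOn (Tf · x) (Ici 0)) (σ : Hist τ d) :
    ContinuousOn (G · σ) (Ici 0) := by
  have hτ' : -τ ≤ 0 := neg_nonpos.2 hτ
  set z₀ : Icc (-τ) (0:ℝ) := ⟨0, hτ', le_rfl⟩
  set Φ : ℝ → Rd d := fun r => if r ≤ 0 then σ (projIcc (-τ) 0 hτ' r) else Tf (max r 0) (σ z₀)
  have hΦ : Continuous Φ := by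
    refine Continuous.if_le (σ.continuous.comp continuous_projIcc)
      ((hTf _).comp_continuous (continuous_id.max continuous_const) fun r => le_max_right r 0)
      continuous_id continuous_const fun r hr => ?_
    simp [hr, hTf₀, z₀]
  have hGΦ : ∀ u ∈ Ici (0:ℝ), G u σ = (ContinuousMap.curry
      ⟨fun p : ℝ × Icc (-τ) (0:ℝ) => Φ (p.1 + p.2), by fun_prop⟩) u := by
    intro u hu
    ext1 s
    rcases le_or_gt (u + s) 0 with hs | hs
    · have hmem : u + (s : ℝ) ∈ Icc (-τ) 0 := ⟨by linarith [s.2.1, mem_Ici.1 hu], hs⟩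
      simp [(h u hu σ s).1 ⟨_, hmem⟩ rfl, Φ, hs, projIcc_of_mem hτ' hmem]
    · simp [(h u hu σ s).2 hs z₀ rfl, Φ, not_le.2 hs, hs.le]
  exact (ContinuousMap.continuous _).continuousOn.congr hGΦ

end ResExt

theorem eventually_mapsTo_closedBall {ι X Y : Type*} [TopologicalSpace ι]
    [SeminormedAddCommGroup X] [SeminormedAddCommGroup Y] {s : Set ι} (hs : IsCompact s)
    {G : ι → X → Y} (hG₀ : ContinuousOn (G · 0) s) {c : ℝ} (hc : 0 ≤ c)
    (hG : ∀ i ∈ s, ∀ x y, dist (G i x) (G i y) ≤ c * dist x y) (R : ℝ) :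
    ∀ᶠ C in atTop, ∀ i ∈ s, MapsTo (G i) (closedBall 0 R) (closedBall 0 C) := by
  obtain ⟨M, hM⟩ := hs.exists_bound_of_continuousOn hG₀
  refine eventually_atTop.2 ⟨M + c * R, fun C hC i hi x hx => ?_⟩
  rw [mem_closedBall_zero_iff] at hx ⊢
  calc ‖G i x‖ ≤ ‖G i 0‖ + ‖G i x - G i 0‖ := norm_le_norm_add_norm_sub' _ _
    _ ≤ M + c * ‖x‖ := add_le_add (hM i hi) (by simpa [dist_eq_norm] using hG i hi x 0)
    _ ≤ C := by nlinarith

theorem norm_integral_sub_integral_le_of_kernel {X E : Type*} [SeminormedAddCommGroup X]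
    [MeasurableSpace X] [NormedAddCommGroup E] [NormedSpace ℝ E] {K : E → X → E} {L : ℝ}
    (hK : ∀ x x' σ σ', ‖K x σ - K x' σ'‖ ≤ L * (‖x - x'‖ + ‖σ - σ'‖))
    {m : Measure X} [IsProbabilityMeasure m] (hint : ∀ x, Integrable (K x) m) (x x' : E) :
    ‖(∫ σ, K x σ ∂m) - ∫ σ, K x' σ ∂m‖ ≤ L * ‖x - x'‖ := by
  rw [← integral_sub (hint x) (hint x')]
  simpa using norm_integral_le_of_norm_le_const (μ := m)
    (ae_of_all _ fun σ => by simpa using hK x x' σ σ)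

theorem Icc_mem_nhdsWithin_Ici_add_one (u : ℝ) : Icc 0 (u + 1) ∈ 𝓝[Ici 0] u := by
  simpa only [Ici_inter_Iic] using inter_mem_nhdsWithin (Ici 0) (Iic_mem_nhds (lt_add_one u))

theorem integral_comp_max_zero {E : Type*} [NormedAddCommGroup E] [NormedSpace ℝ E] (f : ℝ → E)
    {t : ℝ} (ht : 0 ≤ t) : ∫ u in (0:ℝ)..t, f (max u 0) = ∫ u in (0:ℝ)..t, f u :=
  intervalIntegral.integral_congr fun u hu => by
    rw [uIcc_of_le ht] at hu
    simp only [max_eq_left hu.1]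

namespace IsFixedPointSol

variable {d : ℕ} {τ L R₀ : ℝ} [MeasurableSpace (Hist τ d)]
  {K : Rd d → Hist τ d → Rd d} {μin νin : Measure (Hist τ d)} {μ ν : ℝ → Measure (Hist τ d)}
  {Tf Tf' : ℝ → Rd d → Rd d} {G G' : ℝ → Hist τ d → Hist τ d}

theorem dist_flow_le (h : IsFixedPointSol τ R₀ K μin μ Tf G) (hL : 0 ≤ L)
    (hK : ∀ x x' σ σ', ‖K x σ - K x' σ'‖ ≤ L * (‖x - x'‖ + ‖σ - σ'‖))
    {t : ℝ} (ht : 0 ≤ t) (x y : Rd d) : dist (Tf t x) (Tf t y) ≤ exp (L * t) * dist x y := by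
  obtain ⟨hprob, -, -, hint, hTf₀, hTf, -⟩ := h
  simpa [hTf₀] using _root_.dist_flow_le hL
    (fun t => norm_integral_sub_integral_le_of_kernel hK (hint t)) hTf ht x y

theorem dist_le_mul (h : IsFixedPointSol τ R₀ K μin μ Tf G) (hL : 0 ≤ L)
    (hK : ∀ x x' σ σ', ‖K x σ - K x' σ'‖ ≤ L * (‖x - x'‖ + ‖σ - σ'‖))
    {t : ℝ} (ht : 0 ≤ t) (σ σ' : Hist τ d) : dist (G t σ) (G t σ') ≤ exp (L * t) * dist σ σ' := by
  have hflow := fun (r : ℝ) (hr : 0 ≤ r) => h.dist_flow_le hL hK hr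
  obtain ⟨-, -, -, -, -, -, -, hres, -⟩ := h
  exact hres.dist_le_mul hL hflow ht σ σ'

theorem continuousOn_G (h : IsFixedPointSol τ R₀ K μin μ Tf G) (hτ : 0 ≤ τ) (σ : Hist τ d) :
    ContinuousOn (G · σ) (Ici 0) := by
  obtain ⟨-, -, -, -, hTf₀, hTf, -, hres, -⟩ := h
  exact hres.continuousOn hτ hTf₀ (fun x t ht => (hTf x t ht).continuousWithinAt) σ

theorem eventually_mapsTo (h : IsFixedPointSol τ R₀ K μin μ Tf G) (hτ : 0 ≤ τ) (hL : 0 ≤ L)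
    (hK : ∀ x x' σ σ', ‖K x σ - K x' σ'‖ ≤ L * (‖x - x'‖ + ‖σ - σ'‖)) (T : ℝ) :
    ∀ᶠ C in atTop, ∀ t ∈ Icc 0 T, MapsTo (G t) (closedBall 0 R₀) (closedBall 0 C) :=
  eventually_mapsTo_closedBall isCompact_Icc ((h.continuousOn_G hτ 0).mono Icc_subset_Ici_self)
    (exp_pos (L * T)).le (fun t ht σ σ' => (h.dist_le_mul hL hK ht.1 σ σ').trans
      (by gcongr; exact ht.2)) R₀

variable [OpensMeasurableSpace (Hist τ d)]

theorem ae_mem_closedBall (h : IsFixedPointSol τ R₀ K μin μ Tf G) {T C : ℝ}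
    (hC : ∀ t ∈ Icc 0 T, MapsTo (G t) (closedBall 0 R₀) (closedBall 0 C)) {t : ℝ}
    (ht : t ∈ Icc 0 T) : ∀ᵐ σ ∂(μ t), σ ∈ closedBall 0 C := by
  obtain ⟨-, -, hsupp, -, -, -, hGm, -, hfix⟩ := h
  have hμin : ∀ᵐ σ ∂μin, σ ∈ closedBall 0 R₀ := mem_ae_iff.2 hsupp
  rw [hfix t ht.1]
  exact (ae_map_iff (hGm t).aemeasurable measurableSet_closedBall).2
    (hμin.mono fun σ hσ => hC t ht hσ)

theorem norm_integral_sub_integral_le_mul_W1 (hμ : IsFixedPointSol τ R₀ K μin μ Tf G)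
    (hν : IsFixedPointSol τ R₀ K νin ν Tf' G') (hτ : 0 ≤ τ) (hL : 0 < L)
    (hK : ∀ x x' σ σ', ‖K x σ - K x' σ'‖ ≤ L * (‖x - x'‖ + ‖σ - σ'‖)) {t : ℝ} (ht : 0 ≤ t)
    (y : Rd d) : ‖(∫ σ, K y σ ∂μ t) - ∫ σ, K y σ ∂ν t‖ ≤ L * W1 (μ t) (ν t) := by
  obtain ⟨C, hCμ, hCν⟩ :=
    ((hμ.eventually_mapsTo hτ hL.le hK t).and (hν.eventually_mapsTo hτ hL.le hK t)).exists
  have ht' : t ∈ Icc 0 t := ⟨ht, le_rfl⟩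
  have hμC := hμ.ae_mem_closedBall hCμ ht'
  have hνC := hν.ae_mem_closedBall hCν ht'
  obtain ⟨hprob, -, -, hint, -⟩ := hμ
  obtain ⟨hprob', -, -, hint', -⟩ := hν
  exact _root_.norm_integral_sub_integral_le_mul_W1 hμC hνC hL
    (fun σ σ' => by simpa [dist_eq_norm] using hK y y σ σ') (hint t y) (hint' t y)

variable [IsProbabilityMeasure μin] [IsProbabilityMeasure νin]

theorem tendsto_W1 (h : IsFixedPointSol τ R₀ K μin μ Tf G)
    (hτ : 0 ≤ τ) (hL : 0 ≤ L) (hK : ∀ x x' σ σ', ‖K x σ - K x' σ'‖ ≤ L * (‖x - x'‖ + ‖σ - σ'‖))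
    {u : ℝ} (hu : 0 ≤ u) : Tendsto (fun u' => W1 (μ u') (μ u)) (𝓝[Ici 0] u) (𝓝 0) := by
  obtain ⟨C, hC⟩ := (h.eventually_mapsTo hτ hL hK (u + 1)).exists
  have hcont := h.continuousOn_G hτ
  obtain ⟨-, -, hsupp, -, -, -, hGm, -, hfix⟩ := h
  have hμin : ∀ᵐ σ ∂μin, σ ∈ closedBall 0 R₀ := mem_ae_iff.2 hsupp
  have hGC : ∀ t ∈ Icc 0 (u + 1), ∀ᵐ σ ∂μin, G t σ ∈ closedBall 0 C := fun t ht =>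
    hμin.mono fun σ hσ => hC t ht hσ
  refine (tendsto_W1_map hGm (hGm u) (eventually_of_mem (Icc_mem_nhdsWithin_Ici_add_one u) hGC)
    (hGC u ⟨hu, by linarith⟩) fun σ => hcont σ u hu).congr' ?_
  filter_upwards [self_mem_nhdsWithin] with u' hu'
  rw [hfix u' hu', hfix u hu]

theorem continuousOn_W1 (hμ : IsFixedPointSol τ R₀ K μin μ Tf G)
    (hν : IsFixedPointSol τ R₀ K νin ν Tf' G') (hτ : 0 ≤ τ) (hL : 0 ≤ L)
    (hK : ∀ x x' σ σ', ‖K x σ - K x' σ'‖ ≤ L * (‖x - x'‖ + ‖σ - σ'‖)) :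
    ContinuousOn (fun t => W1 (μ t) (ν t)) (Ici 0) := by
  intro u hu
  obtain ⟨C, hCμ, hCν⟩ :=
    ((hμ.eventually_mapsTo hτ hL hK (u + 1)).and (hν.eventually_mapsTo hτ hL hK (u + 1))).exists
  have := hμ.1
  have := hν.1
  have hu' : u ∈ Icc 0 (u + 1) := ⟨hu, by linarith⟩
  exact tendsto_W1_of_tendsto (eventually_of_mem (Icc_mem_nhdsWithin_Ici_add_one u) fun t ht =>
      ⟨hμ.ae_mem_closedBall hCμ ht, hν.ae_mem_closedBall hCν ht⟩)
    (hμ.ae_mem_closedBall hCμ hu') (hν.ae_mem_closedBall hCν hu')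
    (hμ.tendsto_W1 hτ hL hK hu) (hν.tendsto_W1 hτ hL hK hu)

theorem dist_le_integral_W1 (hμ : IsFixedPointSol τ R₀ K μin μ Tf G)
    (hν : IsFixedPointSol τ R₀ K νin ν Tf' G') (hτ : 0 ≤ τ) (hL : 0 < L)
    (hK : ∀ x x' σ σ', ‖K x σ - K x' σ'‖ ≤ L * (‖x - x'‖ + ‖σ - σ'‖)) {t : ℝ} (ht : 0 ≤ t)
    (σ : Hist τ d) :
    dist (G t σ) (G' t σ) ≤ L * exp (L * t) * ∫ r in (0:ℝ)..t, W1 (μ r) (ν r) := by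
  set W : ℝ → ℝ := fun r => W1 (μ r) (ν r)
  have hW : Continuous fun r => L * W (max r 0) := continuous_const.mul
    ((hμ.continuousOn_W1 hν hτ hL.le hK).comp_continuous (continuous_id.max continuous_const)
      fun r => le_max_right r 0)
  have hW₀ : ∀ r, 0 ≤ L * W (max r 0) := fun r => mul_nonneg hL.le (W1_nonneg _ _)
  have hdrift := fun u (hu : 0 ≤ u) => hμ.norm_integral_sub_integral_le_mul_W1 hν hτ hL hK hu
  obtain ⟨hprob, -, -, hint, hTf₀, hTf, -, hres, -⟩ := hμ
  obtain ⟨-, -, -, -, hTf₀', hTf', -, hres', -⟩ := hν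
  have hflow : ∀ r ∈ Ioc 0 t, ∀ x,
      dist (Tf r x) (Tf' r x) ≤ L * exp (L * t) * ∫ r in (0:ℝ)..t, W r := by
    intro r hr x
    calc dist (Tf r x) (Tf' r x) ≤ exp (L * r) * ∫ u in (0:ℝ)..r, L * W (max u 0) := by
          rw [dist_eq_norm]
          exact norm_flow_sub_flow_le hL.le
            (fun t => norm_integral_sub_integral_le_of_kernel hK (hint t))
            (fun u hu y => by simpa [max_eq_left hu] using hdrift u hu y) hW hW₀ (hTf x) (hTf' x)
            (by rw [hTf₀, hTf₀']) hr.1.le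
      _ ≤ exp (L * t) * ∫ u in (0:ℝ)..t, L * W (max u 0) :=
          mul_le_mul (exp_le_exp.2 (by nlinarith [hr.2]))
            (intervalIntegral.integral_mono_interval le_rfl hr.1.le hr.2 (ae_of_all _ hW₀)
              (hW.intervalIntegrable _ _))
            (intervalIntegral.integral_nonneg hr.1.le fun u _ => hW₀ u) (exp_pos _).le
      _ = L * exp (L * t) * ∫ r in (0:ℝ)..t, W r := by
          rw [intervalIntegral.integral_const_mul, integral_comp_max_zero W ht]; ring
  have hB : 0 ≤ L * exp (L * t) * ∫ r in (0:ℝ)..t, W r :=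
    mul_nonneg (by positivity) (intervalIntegral.integral_nonneg ht fun u _ => W1_nonneg _ _)
  exact hres.dist_le hres' ht σ σ hB (fun s => by rw [dist_self]; exact hB)
    fun r hr z _ => hflow r hr _

theorem W1_le_exp_mul_add (hμ : IsFixedPointSol τ R₀ K μin μ Tf G)
    (hν : IsFixedPointSol τ R₀ K νin ν Tf' G') (hτ : 0 ≤ τ) (hL : 0 < L)
    (hK : ∀ x x' σ σ', ‖K x σ - K x' σ'‖ ≤ L * (‖x - x'‖ + ‖σ - σ'‖)) {t : ℝ} (ht : 0 ≤ t) :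
    W1 (μ t) (ν t) ≤
      exp (L * t) * W1 μin νin + L * exp (L * t) * ∫ r in (0:ℝ)..t, W1 (μ r) (ν r) := by
  obtain ⟨C, hCμ, hCν⟩ :=
    ((hμ.eventually_mapsTo hτ hL.le hK t).and (hν.eventually_mapsTo hτ hL.le hK t)).exists
  have ht' : t ∈ Icc 0 t := ⟨ht, le_rfl⟩
  have hμC := hμ.ae_mem_closedBall hCμ ht'
  have hνC := hν.ae_mem_closedBall hCν ht'
  have hGlip := hμ.dist_le_mul hL.le hK ht
  have hGG' := hμ.dist_le_integral_W1 hν hτ hL hK ht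
  obtain ⟨hprob, -, hsupp, -, -, -, hGm, -, hfix⟩ := hμ
  obtain ⟨hprob', -, hsupp', -, -, -, hGm', -, hfix'⟩ := hν
  have hμin : ∀ᵐ σ ∂μin, σ ∈ closedBall 0 R₀ := mem_ae_iff.2 hsupp
  have hνin : ∀ᵐ σ ∂νin, σ ∈ closedBall 0 R₀ := mem_ae_iff.2 hsupp'
  have hνG : ∀ᵐ σ ∂νin, G t σ ∈ closedBall 0 C := hνin.mono fun σ hσ => hCμ t ht' hσ
  have hνG' : ∀ᵐ σ ∂νin, G' t σ ∈ closedBall 0 C := hνin.mono fun σ hσ => hCν t ht' hσ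
  have := Measure.isProbabilityMeasure_map (μ := νin) (hGm t).aemeasurable
  have hcross := (ae_map_iff (hGm t).aemeasurable measurableSet_closedBall).2 hνG
  calc W1 (μ t) (ν t) ≤ W1 (μ t) (νin.map (G t)) + W1 (νin.map (G t)) (ν t) :=
        W1_le_add hμC hcross hνC
    _ ≤ exp (L * t) * W1 μin νin + ∫ σ, dist (G t σ) (G' t σ) ∂νin := by
        rw [hfix t ht, hfix' t ht]
        exact add_le_add (W1_map_le_mul hμin hνin (hGm t) (exp_pos _) hGlip)
          (W1_map_le_integral_dist (hGm t) (hGm' t) hνG hνG')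
    _ ≤ _ := by
        gcongr
        exact (integral_mono_of_nonneg (ae_of_all _ fun _ => dist_nonneg) (integrable_const _)
          (ae_of_all _ hGG')).trans_eq (by simp)

theorem W1_le_exp_mul_exp_mul (hμ : IsFixedPointSol τ R₀ K μin μ Tf G)
    (hν : IsFixedPointSol τ R₀ K νin ν Tf' G') (hτ : 0 ≤ τ) (hL : 0 < L)
    (hK : ∀ x x' σ σ', ‖K x σ - K x' σ'‖ ≤ L * (‖x - x'‖ + ‖σ - σ'‖)) {T : ℝ} (hT : 0 ≤ T) :
    W1 (μ T) (ν T) ≤ exp (L * T) * exp (L * T * exp (L * T)) * W1 μin νin := by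
  set W : ℝ → ℝ := fun r => W1 (μ r) (ν r)
  have hW : Continuous fun r => W (max r 0) :=
    (hμ.continuousOn_W1 hν hτ hL.le hK).comp_continuous (continuous_id.max continuous_const)
      fun r => le_max_right r 0
  have hW₀ : 0 ≤ W1 μin νin := W1_nonneg _ _
  have key := le_mul_exp_of_le_add_mul_integral (α := exp (L * T) * W1 μin νin)
    (β := L * exp (L * T)) (by positivity) hW hT fun t ht => by
      have hI : 0 ≤ ∫ r in (0:ℝ)..t, W r :=
        intervalIntegral.integral_nonneg ht.1 fun r _ => W1_nonneg _ _
      have hLt : L * t ≤ L * T := mul_le_mul_of_nonneg_left ht.2 hL.le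
      rw [max_eq_left ht.1, integral_comp_max_zero W ht.1]
      calc W t ≤ exp (L * t) * W1 μin νin + L * exp (L * t) * ∫ r in (0:ℝ)..t, W r :=
            hμ.W1_le_exp_mul_add hν hτ hL hK ht.1
        _ ≤ exp (L * T) * W1 μin νin + L * exp (L * T) * ∫ r in (0:ℝ)..t, W r := by gcongr
  rw [max_eq_left hT] at key
  calc W T ≤ exp (L * T) * W1 μin νin * exp (L * exp (L * T) * T) := key
    _ = exp (L * T) * exp (L * T * exp (L * T)) * W1 μin νin := by
        rw [mul_right_comm L]; ring

end IsFixedPointSol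

theorem stmt12_general {d : ℕ} (τ L R₀ : ℝ) (hτ : 0 < τ) (hL : 0 < L)
    [MeasurableSpace (Hist τ d)] [BorelSpace (Hist τ d)]
    (K : Rd d → Hist τ d → Rd d)
    (hK : ∀ x x' σ σ', ‖K x σ - K x' σ'‖ ≤ L * (‖x - x'‖ + ‖σ - σ'‖))
    (μin νin : Measure (Hist τ d))
    [IsProbabilityMeasure μin] [IsProbabilityMeasure νin]
    (μ ν : ℝ → Measure (Hist τ d))
    (Tfμ Tfν : ℝ → Rd d → Rd d) (Gμ Gν : ℝ → Hist τ d → Hist τ d)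
    (hμ : IsFixedPointSol τ R₀ K μin μ Tfμ Gμ)
    (hν : IsFixedPointSol τ R₀ K νin ν Tfν Gν) :
    (∀ t : ℝ, 0 ≤ t →
      W1 (μ t) (ν t)
        ≤ Real.exp (L*t) * W1 μin νin
          + L * Real.exp (L*t) * ∫ r in (0:ℝ)..t, W1 (μ r) (ν r)) ∧
    ∃ r : ℝ → ℝ, Continuous r ∧ MonotoneOn r (Set.Ici (0:ℝ)) ∧ r 0 = 1 ∧
      (∀ t : ℝ, 0 ≤ t → 1 ≤ r t) ∧
      ∀ t : ℝ, 0 ≤ t → W1 (μ t) (ν t) ≤ r t * W1 μin νin := by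
  have hLt : ∀ t, 0 ≤ t → 0 ≤ L * t := fun t ht => mul_nonneg hL.le ht
  refine ⟨fun t => hμ.W1_le_exp_mul_add hν hτ.le hL hK,
    fun t => exp (L * t) * exp (L * t * exp (L * t)), by fun_prop, fun a _ b hb hab => ?_, by simp,
    fun t ht => ?_, fun T => hμ.W1_le_exp_mul_exp_mul hν hτ.le hL hK⟩
  · have hLab : L * a ≤ L * b := mul_le_mul_of_nonneg_left hab hL.le
    have := hLt b hb
    dsimp only
    gcongr
  · have := hLt t ht
    exact one_le_mul_of_one_le_of_one_le (one_le_exp this) (one_le_exp (by positivity))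

theorem stmt12 {d : ℕ} (τ L R₀ : ℝ) (hτ : 0 < τ) (hL : 0 < L) (hR : 0 < R₀)
    [MeasurableSpace (Hist τ d)] [BorelSpace (Hist τ d)]
    (K : Rd d → Hist τ d → Rd d)
    (hK : ∀ x x' σ σ', ‖K x σ - K x' σ'‖ ≤ L * (‖x - x'‖ + ‖σ - σ'‖))
    (μin νin : Measure (Hist τ d))
    [IsProbabilityMeasure μin] [IsProbabilityMeasure νin]
    (μ ν : ℝ → Measure (Hist τ d))
    (Tfμ Tfν : ℝ → Rd d → Rd d) (Gμ Gν : ℝ → Hist τ d → Hist τ d)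
    (hμ : IsFixedPointSol τ R₀ K μin μ Tfμ Gμ)
    (hν : IsFixedPointSol τ R₀ K νin ν Tfν Gν) :
    (∀ t : ℝ, 0 ≤ t →
      W1 (μ t) (ν t)
        ≤ Real.exp (L*t) * W1 μin νin
          + L * Real.exp (L*t) * ∫ r in (0:ℝ)..t, W1 (μ r) (ν r)) ∧
    ∃ r : ℝ → ℝ, Continuous r ∧ MonotoneOn r (Set.Ici (0:ℝ)) ∧ r 0 = 1 ∧
      (∀ t : ℝ, 0 ≤ t → 1 ≤ r t) ∧
      ∀ t : ℝ, 0 ≤ t → W1 (μ t) (ν t) ≤ r t * W1 μin νin :=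
  stmt12_general τ L R₀ hτ hL K hK μin νin μ ν Tfμ Tfν Gμ Gν hμ hν
end
end

section
/- Coherence of the two delayed mean-field descriptions: suppose the path kernel is K(x,σ) = ∫_{-τ}^0 K̃(x, σ(s)) dρ(s) with K̃ globally Lipschitz and ρ ∈ P([-τ,0]). Let μ(t) ∈ P(E) be the unique fixed-point solution μ(t) = (res[t]∘ext[μ])#μ(0) with μ(0) supported in B(0,R₀) ⊂ E. Then μ̃(t) := ev(0)#μ(t) ∈ P(ℝ^d) is the unique solution of ∂_t μ̃ + div(F̃[μ̃] μ̃) = 0 with initial condition μ̃(s) = ev(s)#μ(0) for s ∈ [-τ,0]; moreover the vector fields coincide: F[μ](t,x) = F̃[μ̃](t,x) for all t ≥ 0, x ∈ ℝ^d. -/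
open MeasureTheory Set

noncomputable section

/-!
Both `μ̃` and any competitor `ν` are laws of paths: `ν(u)` is the image of the initial law of
histories under "read the history for `u ≤ 0`, follow the flow for `u > 0`". Writing the path
kernel as a `ρ`-average and exchanging the integrals identifies `F[μ]` with `F̃[μ̃]`, so the flow
of `F[μ]` transports `μ̃`. For uniqueness, the difference of two such flows on the support ball
obeys a Gronwall inequality forced by `L` times the supremum of the same difference over the past;
on a time step of length `log (3/2) / L` this halves every bound, so the flows agree step by step,
and hence so do the path laws.
-/

/-- No integrability is assumed: `f` is integrable iff `g` is, and otherwise both integrals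
are `0`. -/
theorem norm_integral_sub_integral_le {α E : Type*} [MeasurableSpace α] [NormedAddCommGroup E]
    [NormedSpace ℝ E] {μ : Measure α} [IsProbabilityMeasure μ] {f g : α → E} {C : ℝ}
    (hf : AEStronglyMeasurable f μ) (hg : AEStronglyMeasurable g μ)
    (h : ∀ᵐ a ∂μ, ‖f a - g a‖ ≤ C) :
    ‖∫ a, f a ∂μ - ∫ a, g a ∂μ‖ ≤ C := by
  have hC : 0 ≤ C := let ⟨_, ha⟩ := h.exists; (norm_nonneg _).trans ha
  have hfg : Integrable (f - g) μ := (integrable_const C).mono' (hf.sub hg) h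
  by_cases hfi : Integrable f μ
  · have hgi : Integrable g μ := by simpa using hfi.sub hfg
    rw [← integral_sub hfi hgi]
    simpa using norm_integral_le_of_norm_le_const h
  · have hgi : ¬ Integrable g μ := fun hgi => hfi (by simpa using hgi.add hfg)
    simpa [integral_undef hfi, integral_undef hgi] using hC

section Flow

variable {E : Type*} [NormedAddCommGroup E] [NormedSpace ℝ E]

theorem norm_le_gronwallBound_of_hasDerivWithinAt_Ici {K δ ε a b : ℝ} (ha : 0 ≤ a)
    {f f' : ℝ → E} (hf : ∀ t, 0 ≤ t → HasDerivWithinAt f (f' t) (Ici 0) t)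
    (hfa : ‖f a‖ ≤ δ) (bound : ∀ t ∈ Ico a b, ‖f' t‖ ≤ K * ‖f t‖ + ε) :
    ∀ t ∈ Icc a b, ‖f t‖ ≤ gronwallBound δ K ε (t - a) := by
  refine norm_le_gronwallBound_of_norm_deriv_right_le (fun t ht => ?_) (fun t ht => ?_) hfa bound
  · exact (hf t (ha.trans ht.1)).continuousWithinAt.mono fun u hu => ha.trans hu.1
  · exact (hf t (ha.trans ht.1)).mono fun u hu => (ha.trans ht.1).trans hu

variable {L : ℝ} {v S : ℝ → E → E}

theorem norm_flow_sub_le (hv : ∀ t, 0 ≤ t → ∀ x y, ‖v t x - v t y‖ ≤ L * ‖x - y‖)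
    (hS0 : ∀ x, S 0 x = x)
    (hS : ∀ x t, 0 ≤ t → HasDerivWithinAt (fun r => S r x) (v t (S t x)) (Ici 0) t)
    {t : ℝ} (ht : 0 ≤ t) (x y : E) : ‖S t x - S t y‖ ≤ Real.exp (L * t) * ‖x - y‖ := by
  have := norm_le_gronwallBound_of_hasDerivWithinAt_Ici (K := L) (δ := ‖x - y‖) (ε := 0)
    (b := t) le_rfl
    (fun r hr => (hS x r hr).sub (hS y r hr)) (by simp [hS0])
    (fun r hr => by simpa using hv r hr.1 (S r x) (S r y)) t ⟨ht, le_rfl⟩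
  rwa [sub_zero, gronwallBound_ε0, mul_comm] at this

theorem exists_norm_flow_le (hL : 0 ≤ L)
    (hv : ∀ t, 0 ≤ t → ∀ x y, ‖v t x - v t y‖ ≤ L * ‖x - y‖) (hS0 : ∀ x, S 0 x = x)
    (hS : ∀ x t, 0 ≤ t → HasDerivWithinAt (fun r => S r x) (v t (S t x)) (Ici 0) t)
    (T R : ℝ) : ∃ C, ∀ t ∈ Icc 0 T, ∀ x ∈ Metric.closedBall 0 R, ‖S t x‖ ≤ C := by
  obtain ⟨C, hC⟩ := isCompact_Icc.exists_bound_of_continuousOn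
    (fun t ht => (hS 0 t ht.1).continuousWithinAt.mono fun _ hu => hu.1 :
      ContinuousOn (fun r => S r 0) (Icc 0 T))
  refine ⟨C + Real.exp (L * T) * R, fun t ht x hx => ?_⟩
  have hexp : Real.exp (L * t) ≤ Real.exp (L * T) :=
    Real.exp_le_exp.2 (mul_le_mul_of_nonneg_left ht.2 hL)
  calc ‖S t x‖ ≤ ‖S t 0‖ + ‖S t x - S t 0‖ := norm_le_insert' _ _
    _ ≤ C + Real.exp (L * T) * R := by
      gcongr
      · exact hC t ht
      · refine (norm_flow_sub_le hv hS0 hS ht.1 x 0).trans ?_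
        rw [sub_zero]
        exact mul_le_mul hexp (mem_closedBall_zero_iff.1 hx) (norm_nonneg _) (Real.exp_nonneg _)

end Flow

section DelayedGronwall

variable {E ι : Type*} [NormedAddCommGroup E] [NormedSpace ℝ E] {L : ℝ} {B : Set ι}
  {f F : ℝ → ι → E}

theorem norm_le_half_of_delayed_deriv_le (hL : 0 < L) {a M : ℝ} (ha : 0 ≤ a)
    (hf : ∀ x ∈ B, ∀ t, 0 ≤ t → HasDerivWithinAt (f · x) (F t x) (Ici 0) t)
    (hF : ∀ t, 0 ≤ t → ∀ M, (∀ u ∈ Icc 0 t, ∀ y ∈ B, ‖f u y‖ ≤ M) →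
      ∀ x ∈ B, ‖F t x‖ ≤ L * ‖f t x‖ + L * M)
    (hvan : ∀ t ∈ Icc 0 a, ∀ x ∈ B, f t x = 0)
    (hM : ∀ t ∈ Icc 0 (a + Real.log (3 / 2) / L), ∀ x ∈ B, ‖f t x‖ ≤ M) :
    ∀ t ∈ Icc 0 (a + Real.log (3 / 2) / L), ∀ x ∈ B, ‖f t x‖ ≤ M / 2 := by
  intro t ht x hx
  have hM0 : 0 ≤ M := (norm_nonneg _).trans (hM t ht x hx)
  rcases le_or_gt t a with hta | hat
  · rw [hvan t ⟨ht.1, hta⟩ x hx, norm_zero]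
    positivity
  have hgr := norm_le_gronwallBound_of_hasDerivWithinAt_Ici (K := L) (δ := 0) (ε := L * M) ha
    (hf x hx) (by simp [hvan a ⟨ha, le_rfl⟩ x hx])
    (fun u hu => hF u (ha.trans hu.1) M (fun r hr y hy => hM r ⟨hr.1, hr.2.trans hu.2.le⟩ y hy)
      x hx) t ⟨hat.le, ht.2⟩
  have hexp : Real.exp (L * (t - a)) ≤ 3 / 2 := by
    calc Real.exp (L * (t - a)) ≤ Real.exp (L * (Real.log (3 / 2) / L)) := by
          gcongr; linarith [ht.2]
      _ = 3 / 2 := by rw [mul_div_cancel₀ _ hL.ne', Real.exp_log (by norm_num)]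
  rw [gronwallBound_of_K_ne_0 hL.ne', mul_div_cancel_left₀ _ hL.ne'] at hgr
  nlinarith

theorem eq_zero_of_delayed_deriv_le (hL : 0 < L) (hf0 : ∀ x ∈ B, f 0 x = 0)
    (hf : ∀ x ∈ B, ∀ t, 0 ≤ t → HasDerivWithinAt (f · x) (F t x) (Ici 0) t)
    (hbdd : ∀ T, ∃ C, ∀ t ∈ Icc 0 T, ∀ x ∈ B, ‖f t x‖ ≤ C)
    (hF : ∀ t, 0 ≤ t → ∀ M, (∀ u ∈ Icc 0 t, ∀ y ∈ B, ‖f u y‖ ≤ M) →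
      ∀ x ∈ B, ‖F t x‖ ≤ L * ‖f t x‖ + L * M) :
    ∀ t, 0 ≤ t → ∀ x ∈ B, f t x = 0 := by
  set h := Real.log (3 / 2) / L
  have hh : 0 < h := div_pos (Real.log_pos (by norm_num)) hL
  have hstep : ∀ a, 0 ≤ a → (∀ t ∈ Icc 0 a, ∀ x ∈ B, f t x = 0) →
      ∀ t ∈ Icc 0 (a + h), ∀ x ∈ B, f t x = 0 := by
    intro a ha hvan t ht x hx
    obtain ⟨C, hC⟩ := hbdd (a + h)
    have hk : ∀ k : ℕ, ∀ t ∈ Icc 0 (a + h), ∀ x ∈ B, ‖f t x‖ ≤ C * (1 / 2) ^ k := by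
      intro k
      induction k with
      | zero => simpa using hC
      | succ k ih =>
        intro t ht x hx
        have := norm_le_half_of_delayed_deriv_le hL ha hf hF hvan ih t ht x hx
        rw [pow_succ, ← mul_assoc]
        linarith
    have hlim := (tendsto_pow_atTop_nhds_zero_of_lt_one (r := (1 / 2 : ℝ)) (by norm_num)
      (by norm_num)).const_mul C
    rw [mul_zero] at hlim
    exact norm_le_zero_iff.1 (ge_of_tendsto' hlim fun k => hk k t ht x hx)
  have hn : ∀ n : ℕ, ∀ t ∈ Icc 0 (n * h), ∀ x ∈ B, f t x = 0 := by
    intro n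
    induction n with
    | zero =>
      intro t ht x hx
      rw [show t = 0 by simpa using ht]
      exact hf0 x hx
    | succ n ih => simpa [add_mul] using hstep _ (by positivity) ih
  intro t ht x hx
  obtain ⟨n, hn'⟩ := exists_nat_ge (t / h)
  exact hn n t ⟨ht, (div_le_iff₀ hh).1 hn'⟩ x hx

end DelayedGronwall

section PathExtension

variable {τ : ℝ} {d : ℕ} (h0 : -τ ≤ 0)

def present : Icc (-τ) (0 : ℝ) := ⟨0, right_mem_Icc.2 h0⟩

@[simp]
theorem coe_present : (present h0 : ℝ) = 0 := rfl

/-- `ev(u) ∘ ext` in the paper's notation: the history `σ`, continued for `u > 0` by the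
flow `S`. -/
def pathExt (S : ℝ → Rd d → Rd d) (u : ℝ) (σ : Hist τ d) : Rd d :=
  if u ≤ 0 then σ (projIcc (-τ) 0 h0 u) else S u (σ (present h0))

variable {h0} {S : ℝ → Rd d → Rd d}

theorem pathExt_of_mem (σ : Hist τ d) (s : Icc (-τ) (0 : ℝ)) : pathExt h0 S s σ = σ s := by
  rw [pathExt, if_pos s.2.2, projIcc_val]

theorem pathExt_of_pos {u : ℝ} (hu : 0 < u) (σ : Hist τ d) :
    pathExt h0 S u σ = S u (σ (present h0)) :=
  if_neg hu.not_ge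

theorem IsResExt.apply_eq_pathExt {G : ℝ → Hist τ d → Hist τ d} (hG : IsResExt τ S G)
    {t : ℝ} (ht : 0 ≤ t) (σ : Hist τ d) (s : Icc (-τ) (0 : ℝ)) :
    G t σ s = pathExt h0 S (t + s) σ := by
  rcases le_or_gt (t + s) 0 with hts | hts
  · have hmem : t + (s : ℝ) ∈ Icc (-τ) 0 := ⟨by linarith [s.2.1], hts⟩
    rw [(hG t ht σ s).1 ⟨_, hmem⟩ rfl, ← pathExt_of_mem (h0 := h0) σ ⟨_, hmem⟩]
  · rw [(hG t ht σ s).2 hts (present h0) rfl, pathExt_of_pos hts]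

theorem continuous_pathExt (hS0 : ∀ x, S 0 x = x)
    (hSc : ∀ x, ContinuousOn (fun r => S r x) (Ici 0)) (σ : Hist τ d) :
    Continuous fun u => pathExt h0 S u σ := by
  refine continuous_if_le continuous_id continuous_const
    (σ.continuous.comp continuous_projIcc).continuousOn (hSc _) fun u hu => ?_
  rw [show u = 0 from hu, hS0, projIcc_right]
  rfl

variable [MeasurableSpace (Hist τ d)] [BorelSpace (Hist τ d)]

theorem measurable_pathExt (hSm : ∀ u, 0 < u → Measurable (S u)) (u : ℝ) :
    Measurable (pathExt h0 S u) := by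
  unfold pathExt
  split_ifs with hu
  · exact (continuous_eval_const _).measurable
  · exact (hSm u (not_le.1 hu)).comp (continuous_eval_const _).measurable

end PathExtension

section PathLaw

variable {τ : ℝ} {d : ℕ} {h0 : -τ ≤ 0} {S S₁ S₂ : ℝ → Rd d → Rd d}

theorem norm_pathExt_sub_le {R M r u : ℝ} (hr : 0 ≤ r) (hu : u ≤ r) {σ : Hist τ d}
    (hσ : ‖σ‖ ≤ R) (hS : ∀ t ∈ Icc 0 r, ∀ x ∈ Metric.closedBall 0 R, ‖S₁ t x - S₂ t x‖ ≤ M) :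
    ‖pathExt h0 S₁ u σ - pathExt h0 S₂ u σ‖ ≤ M := by
  have hσ0 : σ (present h0) ∈ Metric.closedBall 0 R :=
    mem_closedBall_zero_iff.2 ((σ.norm_coe_le_norm _).trans hσ)
  rcases le_or_gt u 0 with hu0 | hu0
  · simp only [pathExt, if_pos hu0, sub_self, norm_zero]
    exact (norm_nonneg _).trans (hS 0 ⟨le_rfl, hr⟩ _ hσ0)
  · rw [pathExt_of_pos hu0, pathExt_of_pos hu0]
    exact hS u ⟨hu0.le, hu⟩ _ hσ0

theorem norm_pathExt_le {R C T u : ℝ} (hu : u ≤ T) {σ : Hist τ d} (hσ : ‖σ‖ ≤ R)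
    (hS : ∀ t ∈ Icc 0 T, ∀ x ∈ Metric.closedBall 0 R, ‖S t x‖ ≤ C) :
    ‖pathExt h0 S u σ‖ ≤ max R C := by
  rcases le_or_gt u 0 with hu0 | hu0
  · rw [pathExt, if_pos hu0]
    exact le_max_of_le_left ((σ.norm_coe_le_norm _).trans hσ)
  · rw [pathExt_of_pos hu0]
    exact le_max_of_le_right (hS u ⟨hu0.le, hu⟩ _
      (mem_closedBall_zero_iff.2 ((σ.norm_coe_le_norm _).trans hσ)))

variable [MeasurableSpace (Hist τ d)]

structure IsPathLaw (h0 : -τ ≤ 0) (μin : Measure (Hist τ d)) (S : ℝ → Rd d → Rd d)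
    (m : ℝ → Measure (Rd d)) : Prop where
  flow_zero : ∀ x, S 0 x = x
  continuousOn : ∀ x, ContinuousOn (fun r => S r x) (Ici 0)
  measurable : ∀ u, 0 < u → Measurable (S u)
  map_eq : ∀ u, -τ ≤ u → m u = μin.map (pathExt h0 S u)

variable {μin : Measure (Hist τ d)} {m : ℝ → Measure (Rd d)}

theorem IsPathLaw.map_eval (hm : IsPathLaw h0 μin S m) (s : Icc (-τ) (0 : ℝ)) :
    m s = μin.map fun σ : Hist τ d => σ s := by
  rw [hm.map_eq s s.2.1]
  congr 1
  exact funext fun σ => pathExt_of_mem σ s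

variable [BorelSpace (Hist τ d)]

theorem IsPathLaw.of_history
    (hhist : ∀ s : Icc (-τ) (0 : ℝ), m s = μin.map fun σ : Hist τ d => σ s)
    (hpush : ∀ u, 0 ≤ u → m u = (m 0).map (S u)) (hS0 : ∀ x, S 0 x = x)
    (hSc : ∀ x, ContinuousOn (fun r => S r x) (Ici 0)) (hSm : ∀ u, 0 < u → Measurable (S u)) :
    IsPathLaw h0 μin S m := by
  refine ⟨hS0, hSc, hSm, fun u hu => ?_⟩
  rcases le_or_gt u 0 with hu0 | hu0
  · have hpath : pathExt h0 S u = fun σ : Hist τ d => σ ⟨u, hu, hu0⟩ :=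
      funext fun σ => pathExt_of_mem σ ⟨u, hu, hu0⟩
    rw [hpath, ← hhist]
  · have hpath : pathExt h0 S u = S u ∘ fun σ : Hist τ d => σ (present h0) :=
      funext fun σ => pathExt_of_pos hu0 σ
    rw [hpath, ← Measure.map_map (hSm u hu0) (continuous_eval_const _).measurable,
      ← hhist (present h0), hpush u hu0.le]
    rfl

theorem IsPathLaw.map_flow (hm : IsPathLaw h0 μin S m) {u : ℝ} (hu : 0 ≤ u) :
    m u = (m 0).map (S u) := by
  rcases hu.eq_or_lt with rfl | hu
  · rw [funext hm.flow_zero, Measure.map_id']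
  · rw [hm.map_eq u (by linarith), show (0 : ℝ) = (present h0 : ℝ) from rfl, hm.map_eval,
      Measure.map_map (hm.measurable u hu) (continuous_eval_const _).measurable]
    congr 1
    exact funext fun σ => pathExt_of_pos hu σ

end PathLaw

section DelayedField

variable {τ : ℝ} {d : ℕ} {h0 : -τ ≤ 0} {S S₁ S₂ : ℝ → Rd d → Rd d}
  [MeasurableSpace (Hist τ d)] [BorelSpace (Hist τ d)] {μin : Measure (Hist τ d)}
  {m m₁ m₂ : ℝ → Measure (Rd d)} {L : ℝ} {Kt : Rd d → Rd d → Rd d}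
  {ρ : Measure (Icc (-τ) (0 : ℝ))}

def delayedField (ρ : Measure (Icc (-τ) (0 : ℝ))) (Kt : Rd d → Rd d → Rd d)
    (m : ℝ → Measure (Rd d)) (t : ℝ) (x : Rd d) : Rd d :=
  ∫ s, ∫ y, Kt x y ∂(m (t + s)) ∂ρ

theorem continuous_kernel_of_norm_sub_le
    (hKt : ∀ x x' y y', ‖Kt x y - Kt x' y'‖ ≤ L * (‖x - x'‖ + ‖y - y'‖)) (x : Rd d) :
    Continuous (Kt x) :=
  (LipschitzWith.of_dist_le' (K := L) fun y y' => by
    simpa [dist_eq_norm] using hKt x x y y').continuous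

theorem IsPathLaw.integral_eq (hm : IsPathLaw h0 μin S m) {g : Rd d → Rd d}
    (hg : Continuous g) {u : ℝ} (hu : -τ ≤ u) :
    ∫ y, g y ∂(m u) = ∫ σ, g (pathExt h0 S u σ) ∂μin := by
  rw [hm.map_eq u hu,
    integral_map (measurable_pathExt hm.measurable u).aemeasurable hg.aestronglyMeasurable]

theorem IsPathLaw.stronglyMeasurable_comp_shift (hm : IsPathLaw h0 μin S m) {g : Rd d → Rd d}
    (hg : Continuous g) (t : ℝ) :
    StronglyMeasurable fun p : Icc (-τ) (0 : ℝ) × Hist τ d => g (pathExt h0 S (t + p.1) p.2) := by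
  have hjoint : StronglyMeasurable (Function.uncurry (pathExt h0 S)) :=
    stronglyMeasurable_uncurry_of_continuous_of_stronglyMeasurable
      (continuous_pathExt hm.flow_zero hm.continuousOn)
      fun u => (measurable_pathExt hm.measurable u).stronglyMeasurable
  exact hg.comp_stronglyMeasurable (hjoint.comp_measurable
    ((measurable_const.add (measurable_subtype_coe.comp measurable_fst)).prodMk measurable_snd))

theorem IsPathLaw.aestronglyMeasurable_integral [SFinite μin] (hm : IsPathLaw h0 μin S m)
    {g : Rd d → Rd d} (hg : Continuous g) {t : ℝ} (ht : 0 ≤ t) :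
    AEStronglyMeasurable (fun s : Icc (-τ) (0 : ℝ) => ∫ y, g y ∂(m (t + s))) ρ := by
  refine ((hm.stronglyMeasurable_comp_shift hg t).integral_prod_right' (ν := μin)
    ).aestronglyMeasurable.congr (ae_of_all _ fun s => ?_)
  exact (hm.integral_eq hg (u := t + s) (by linarith [s.2.1])).symm

variable [IsProbabilityMeasure μin] [IsProbabilityMeasure ρ]

theorem IsPathLaw.norm_delayedField_sub_le (hm : IsPathLaw h0 μin S m)
    (hKt : ∀ x x' y y', ‖Kt x y - Kt x' y'‖ ≤ L * (‖x - x'‖ + ‖y - y'‖)) {t : ℝ} (ht : 0 ≤ t)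
    (x x' : Rd d) : ‖delayedField ρ Kt m t x - delayedField ρ Kt m t x'‖ ≤ L * ‖x - x'‖ := by
  have hc := continuous_kernel_of_norm_sub_le hKt
  refine norm_integral_sub_integral_le (hm.aestronglyMeasurable_integral (hc x) ht)
    (hm.aestronglyMeasurable_integral (hc x') ht) (ae_of_all _ fun s => ?_)
  have hs : -τ ≤ t + s := by linarith [s.2.1]
  rw [hm.integral_eq (hc x) hs, hm.integral_eq (hc x') hs]
  have hpath := measurable_pathExt (h0 := h0) hm.measurable (t + s)
  refine norm_integral_sub_integral_le
    ((hc x).comp_aestronglyMeasurable hpath.aestronglyMeasurable)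
    ((hc x').comp_aestronglyMeasurable hpath.aestronglyMeasurable) (ae_of_all _ fun σ => ?_)
  simpa using hKt x x' (pathExt h0 S (t + s) σ) (pathExt h0 S (t + s) σ)

theorem IsPathLaw.norm_delayedField_sub_delayedField_le (hm₁ : IsPathLaw h0 μin S₁ m₁)
    (hm₂ : IsPathLaw h0 μin S₂ m₂) (hL : 0 ≤ L)
    (hKt : ∀ x x' y y', ‖Kt x y - Kt x' y'‖ ≤ L * (‖x - x'‖ + ‖y - y'‖))
    {R : ℝ} (hsupp : ∀ᵐ σ ∂μin, ‖σ‖ ≤ R) {t M : ℝ} (ht : 0 ≤ t)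
    (hS : ∀ u ∈ Icc 0 t, ∀ x ∈ Metric.closedBall 0 R, ‖S₁ u x - S₂ u x‖ ≤ M) (y : Rd d) :
    ‖delayedField ρ Kt m₁ t y - delayedField ρ Kt m₂ t y‖ ≤ L * M := by
  have hc := continuous_kernel_of_norm_sub_le hKt y
  refine norm_integral_sub_integral_le (hm₁.aestronglyMeasurable_integral hc ht)
    (hm₂.aestronglyMeasurable_integral hc ht) (ae_of_all _ fun s => ?_)
  have hs : -τ ≤ t + s := by linarith [s.2.1]
  rw [hm₁.integral_eq hc hs, hm₂.integral_eq hc hs]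
  refine norm_integral_sub_integral_le
    (hc.comp_aestronglyMeasurable (measurable_pathExt hm₁.measurable _).aestronglyMeasurable)
    (hc.comp_aestronglyMeasurable (measurable_pathExt hm₂.measurable _).aestronglyMeasurable) ?_
  filter_upwards [hsupp] with σ hσ
  calc ‖Kt y (pathExt h0 S₁ (t + s) σ) - Kt y (pathExt h0 S₂ (t + s) σ)‖
      ≤ L * ‖pathExt h0 S₁ (t + s) σ - pathExt h0 S₂ (t + s) σ‖ := by simpa using hKt y y _ _
    _ ≤ L * M := by
      gcongr
      exact norm_pathExt_sub_le ht (by linarith [s.2.2]) hσ hS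

theorem IsPathLaw.delayedField_eq_integral_integral (hm : IsPathLaw h0 μin S m) (hL : 0 ≤ L)
    (hKt : ∀ x x' y y', ‖Kt x y - Kt x' y'‖ ≤ L * (‖x - x'‖ + ‖y - y'‖))
    {R : ℝ} (hsupp : ∀ᵐ σ ∂μin, ‖σ‖ ≤ R) {t C : ℝ} (ht : 0 ≤ t)
    (hC : ∀ u ∈ Icc 0 t, ∀ x ∈ Metric.closedBall 0 R, ‖S u x‖ ≤ C) (x : Rd d) :
    delayedField ρ Kt m t x = ∫ σ, ∫ s, Kt x (pathExt h0 S (t + s) σ) ∂ρ ∂μin := by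
  have hc := continuous_kernel_of_norm_sub_le hKt x
  have hmeas := (hm.stronglyMeasurable_comp_shift hc t).comp_measurable measurable_swap
  have hint : Integrable (Function.uncurry fun σ (s : Icc (-τ) (0 : ℝ)) =>
      Kt x (pathExt h0 S (t + s) σ)) (μin.prod ρ) := by
    refine (integrable_const (‖Kt x 0‖ + L * max R C)).mono' hmeas.aestronglyMeasurable ?_
    filter_upwards [(Measure.quasiMeasurePreserving_fst (μ := μin) (ν := ρ)).ae hsupp] with p hp
    calc ‖Kt x (pathExt h0 S (t + p.2) p.1)‖
        ≤ ‖Kt x 0‖ + ‖Kt x (pathExt h0 S (t + p.2) p.1) - Kt x 0‖ := norm_le_insert' _ _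
      _ ≤ ‖Kt x 0‖ + L * max R C := by
        gcongr
        calc _ ≤ L * ‖pathExt h0 S (t + p.2) p.1‖ := by simpa using hKt x x _ 0
          _ ≤ L * max R C := by
            gcongr
            exact norm_pathExt_le (by linarith [p.2.2.2]) hp hC
  rw [integral_integral_swap hint]
  exact integral_congr_ae
    (ae_of_all _ fun s => hm.integral_eq hc (u := t + s) (by linarith [s.2.1]))

end DelayedField

section Uniqueness

variable {τ : ℝ} {d : ℕ} {h0 : -τ ≤ 0} {S₁ S₂ : ℝ → Rd d → Rd d}
  [MeasurableSpace (Hist τ d)] [BorelSpace (Hist τ d)] {μin : Measure (Hist τ d)}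
  [IsProbabilityMeasure μin] {m₁ m₂ : ℝ → Measure (Rd d)} {L : ℝ} {Kt : Rd d → Rd d → Rd d}
  {ρ : Measure (Icc (-τ) (0 : ℝ))} [IsProbabilityMeasure ρ]

theorem IsPathLaw.eq_of_hasDerivWithinAt (hm₁ : IsPathLaw h0 μin S₁ m₁)
    (hm₂ : IsPathLaw h0 μin S₂ m₂) (hL : 0 < L)
    (hKt : ∀ x x' y y', ‖Kt x y - Kt x' y'‖ ≤ L * (‖x - x'‖ + ‖y - y'‖))
    {R : ℝ} (hsupp : ∀ᵐ σ ∂μin, ‖σ‖ ≤ R)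
    (hS₁ : ∀ x t, 0 ≤ t →
      HasDerivWithinAt (fun r => S₁ r x) (delayedField ρ Kt m₁ t (S₁ t x)) (Ici 0) t)
    (hS₂ : ∀ x t, 0 ≤ t →
      HasDerivWithinAt (fun r => S₂ r x) (delayedField ρ Kt m₂ t (S₂ t x)) (Ici 0) t) :
    ∀ t, 0 ≤ t → m₁ t = m₂ t := by
  have hbdd (T : ℝ) :
      ∃ C, ∀ t ∈ Icc 0 T, ∀ x ∈ Metric.closedBall 0 R, ‖S₁ t x - S₂ t x‖ ≤ C := by
    obtain ⟨C₁, hC₁⟩ := exists_norm_flow_le hL.le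
      (fun t ht => hm₁.norm_delayedField_sub_le hKt ht) hm₁.flow_zero hS₁ T R
    obtain ⟨C₂, hC₂⟩ := exists_norm_flow_le hL.le
      (fun t ht => hm₂.norm_delayedField_sub_le hKt ht) hm₂.flow_zero hS₂ T R
    exact ⟨C₁ + C₂, fun t ht x hx =>
      (norm_sub_le _ _).trans (add_le_add (hC₁ t ht x hx) (hC₂ t ht x hx))⟩
  have hagree : ∀ t, 0 ≤ t → ∀ x ∈ Metric.closedBall 0 R, S₁ t x - S₂ t x = 0 := by
    refine eq_zero_of_delayed_deriv_le hL (fun x _ => by simp [hm₁.flow_zero, hm₂.flow_zero])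
      (fun x _ t ht => (hS₁ x t ht).sub (hS₂ x t ht)) hbdd fun t ht M hM x _ => ?_
    calc ‖delayedField ρ Kt m₁ t (S₁ t x) - delayedField ρ Kt m₂ t (S₂ t x)‖
        ≤ ‖delayedField ρ Kt m₁ t (S₁ t x) - delayedField ρ Kt m₂ t (S₁ t x)‖
          + ‖delayedField ρ Kt m₂ t (S₁ t x) - delayedField ρ Kt m₂ t (S₂ t x)‖ :=
          norm_sub_le_norm_sub_add_norm_sub _ _ _
      _ ≤ L * M + L * ‖S₁ t x - S₂ t x‖ :=
          add_le_add (hm₁.norm_delayedField_sub_delayedField_le hm₂ hL.le hKt hsupp ht hM _)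
            (hm₂.norm_delayedField_sub_le hKt ht _ _)
      _ = L * ‖S₁ t x - S₂ t x‖ + L * M := add_comm _ _
  intro t ht
  rw [hm₁.map_eq t (by linarith), hm₂.map_eq t (by linarith)]
  refine Measure.map_congr ?_
  filter_upwards [hsupp] with σ hσ
  refine sub_eq_zero.1 (norm_le_zero_iff.1 (norm_pathExt_sub_le ht le_rfl hσ fun u hu x hx => ?_))
  rw [hagree u hu.1 x hx, norm_zero]

end Uniqueness

section FixedPoint

variable {τ R₀ L : ℝ} {d : ℕ} [MeasurableSpace (Hist τ d)]
  {Kt : Rd d → Rd d → Rd d} {ρ : Measure (Icc (-τ) (0 : ℝ))} [IsProbabilityMeasure ρ]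
  {K : Rd d → Hist τ d → Rd d} {μin : Measure (Hist τ d)} {μ : ℝ → Measure (Hist τ d)}
  {Tf : ℝ → Rd d → Rd d} {G : ℝ → Hist τ d → Hist τ d} {μt : ℝ → Measure (Rd d)}

theorem IsFixedPointSol.ae_norm_le (hμ : IsFixedPointSol τ R₀ K μin μ Tf G) :
    ∀ᵐ σ ∂μin, ‖σ‖ ≤ R₀ := by
  filter_upwards [mem_ae_iff.2 hμ.2.2.1] with σ hσ
  exact mem_closedBall_zero_iff.1 hσ

theorem IsFixedPointSol.norm_field_sub_le (hμ : IsFixedPointSol τ R₀ K μin μ Tf G)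
    (hKt : ∀ x x' y y', ‖Kt x y - Kt x' y'‖ ≤ L * (‖x - x'‖ + ‖y - y'‖))
    (hKdef : ∀ x (σ : Hist τ d), K x σ = ∫ s, Kt x (σ s) ∂ρ) (t : ℝ) (x x' : Rd d) :
    ‖∫ σ, K x σ ∂(μ t) - ∫ σ, K x' σ ∂(μ t)‖ ≤ L * ‖x - x'‖ := by
  obtain ⟨hprob, -, -, hKint, -⟩ := hμ
  have := hprob t
  refine norm_integral_sub_integral_le (hKint t x).aestronglyMeasurable
    (hKint t x').aestronglyMeasurable (ae_of_all _ fun σ => ?_)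
  have hc (z : Rd d) : Continuous fun s => Kt z (σ s) :=
    (continuous_kernel_of_norm_sub_le hKt z).comp σ.continuous
  rw [hKdef, hKdef]
  refine norm_integral_sub_integral_le (hc x).aestronglyMeasurable (hc x').aestronglyMeasurable
    (ae_of_all _ fun s => ?_)
  simpa using hKt x x' (σ s) (σ s)

theorem IsFixedPointSol.continuous_flow (hμ : IsFixedPointSol τ R₀ K μin μ Tf G)
    (hKt : ∀ x x' y y', ‖Kt x y - Kt x' y'‖ ≤ L * (‖x - x'‖ + ‖y - y'‖))
    (hKdef : ∀ x (σ : Hist τ d), K x σ = ∫ s, Kt x (σ s) ∂ρ) {t : ℝ} (ht : 0 ≤ t) :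
    Continuous (Tf t) := by
  have hfield := hμ.norm_field_sub_le hKt hKdef
  obtain ⟨-, -, -, -, hTf0, hTfD, -⟩ := hμ
  have hlip := norm_flow_sub_le (fun t _ => hfield t) hTf0 hTfD ht
  exact (LipschitzWith.of_dist_le' fun x y => by
    simpa only [dist_eq_norm] using hlip x y).continuous

variable (h0 : -τ ≤ 0) [BorelSpace (Hist τ d)]

theorem IsFixedPointSol.isPathLaw (hμ : IsFixedPointSol τ R₀ K μin μ Tf G)
    (hKt : ∀ x x' y y', ‖Kt x y - Kt x' y'‖ ≤ L * (‖x - x'‖ + ‖y - y'‖))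
    (hKdef : ∀ x (σ : Hist τ d), K x σ = ∫ s, Kt x (σ s) ∂ρ)
    (hμt0 : ∀ t : ℝ, 0 ≤ t → ∀ z : Icc (-τ) (0 : ℝ), (z : ℝ) = 0 →
      μt t = (μ t).map fun σ : Hist τ d => σ z)
    (hμtneg : ∀ s : Icc (-τ) (0 : ℝ), μt s = (μ 0).map fun σ : Hist τ d => σ s) :
    IsPathLaw h0 μin Tf μt := by
  have hTfm (u : ℝ) (hu : 0 < u) : Measurable (Tf u) :=
    (hμ.continuous_flow hKt hKdef hu.le).measurable
  obtain ⟨-, hμ0, -, -, hTf0, hTfD, hGm, hres, hfix⟩ := hμ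
  refine ⟨hTf0, fun x t ht => (hTfD x t ht).continuousWithinAt, hTfm, fun u hu => ?_⟩
  rcases le_or_gt u 0 with hu0 | hu0
  · rw [show u = ((⟨u, hu, hu0⟩ : Icc (-τ) (0 : ℝ)) : ℝ) from rfl, hμtneg, hμ0]
    congr 1
    exact funext fun σ => (pathExt_of_mem σ _).symm
  · rw [hμt0 u hu0.le (present h0) rfl, hfix u hu0.le,
      Measure.map_map (continuous_eval_const _).measurable (hGm u)]
    congr 1
    funext σ
    simpa using hres.apply_eq_pathExt (h0 := h0) hu0.le σ (present h0)

theorem IsFixedPointSol.integral_eq_delayedField [IsProbabilityMeasure μin]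
    (hμ : IsFixedPointSol τ R₀ K μin μ Tf G) (hL : 0 ≤ L)
    (hKt : ∀ x x' y y', ‖Kt x y - Kt x' y'‖ ≤ L * (‖x - x'‖ + ‖y - y'‖))
    (hKdef : ∀ x (σ : Hist τ d), K x σ = ∫ s, Kt x (σ s) ∂ρ) (hTf : IsPathLaw h0 μin Tf μt)
    {t : ℝ} (ht : 0 ≤ t) (x : Rd d) :
    ∫ σ, K x σ ∂(μ t) = delayedField ρ Kt μt t x := by
  have hlip := hμ.norm_field_sub_le hKt hKdef
  have hsupp := hμ.ae_norm_le
  obtain ⟨-, -, -, hKint, hTf0, hTfD, hGm, hres, hfix⟩ := hμ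
  obtain ⟨C, hC⟩ := exists_norm_flow_le hL (fun t _ => hlip t) hTf0 hTfD t R₀
  have hK := hKint t x
  rw [hfix t ht] at hK ⊢
  rw [hTf.delayedField_eq_integral_integral hL hKt hsupp ht hC,
    integral_map (hGm t).aemeasurable hK.aestronglyMeasurable]
  refine integral_congr_ae (ae_of_all _ fun σ => ?_)
  simp only [hKdef, hres.apply_eq_pathExt (h0 := h0) ht]

theorem IsFixedPointSol.hasDerivWithinAt_delayedField [IsProbabilityMeasure μin]
    (hμ : IsFixedPointSol τ R₀ K μin μ Tf G) (hL : 0 ≤ L)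
    (hKt : ∀ x x' y y', ‖Kt x y - Kt x' y'‖ ≤ L * (‖x - x'‖ + ‖y - y'‖))
    (hKdef : ∀ x (σ : Hist τ d), K x σ = ∫ s, Kt x (σ s) ∂ρ) (hTf : IsPathLaw h0 μin Tf μt)
    (x : Rd d) {t : ℝ} (ht : 0 ≤ t) :
    HasDerivWithinAt (fun r => Tf r x) (delayedField ρ Kt μt t (Tf t x)) (Ici 0) t := by
  rw [← hμ.integral_eq_delayedField h0 hL hKt hKdef hTf ht]
  obtain ⟨-, -, -, -, -, hTfD, -⟩ := hμ
  exact hTfD x t ht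

end FixedPoint

theorem stmt19_general {d : ℕ} (τ L R₀ : ℝ) (hτ : 0 < τ) (hL : 0 < L)
    [MeasurableSpace (Hist τ d)] [BorelSpace (Hist τ d)]
    -- the path kernel K is given by averaging the point kernel K̃ against ρ
    (Kt : Rd d → Rd d → Rd d)
    (hKt : ∀ x x' y y', ‖Kt x y - Kt x' y'‖ ≤ L * (‖x - x'‖ + ‖y - y'‖))
    (ρ : Measure (Set.Icc (-τ) (0:ℝ))) [IsProbabilityMeasure ρ]
    (K : Rd d → Hist τ d → Rd d)
    (hKdef : ∀ x (σ : Hist τ d), K x σ = ∫ s, Kt x (σ s) ∂ρ)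
    -- μ is the unique fixed-point solution with initial datum supported in B(0,R₀)
    (μin : Measure (Hist τ d)) [IsProbabilityMeasure μin]
    (μ : ℝ → Measure (Hist τ d))
    (Tf : ℝ → Rd d → Rd d) (G : ℝ → Hist τ d → Hist τ d)
    (hμ : IsFixedPointSol τ R₀ K μin μ Tf G)
    -- μ̃(t) = ev(0) # μ(t) for t ≥ 0 and μ̃(s) = ev(s) # μ(0) for s ∈ [-τ,0]
    (μt : ℝ → Measure (Rd d))
    (hμt0 : ∀ t : ℝ, 0 ≤ t → ∀ z : Set.Icc (-τ) (0:ℝ), (z:ℝ) = 0 →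
      μt t = (μ t).map (fun σ : Hist τ d => σ z))
    (hμtneg : ∀ s : Set.Icc (-τ) (0:ℝ), μt (s:ℝ) = (μ 0).map (fun σ : Hist τ d => σ s)) :
    -- the vector fields F[μ] and F̃[μ̃] coincide
    (∀ t : ℝ, 0 ≤ t → ∀ x : Rd d,
      ∫ σ, K x σ ∂(μ t)
        = ∫ s : Set.Icc (-τ) (0:ℝ), (∫ y, Kt x y ∂(μt (t + (s:ℝ)))) ∂ρ) ∧
    -- μ̃ solves the transport equation : it is the push-forward along the flow of F̃[μ̃]
    (∃ S : ℝ → Rd d → Rd d,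
      (∀ x, S 0 x = x) ∧
      (∀ x, ∀ t : ℝ, 0 ≤ t →
        HasDerivWithinAt (fun r => S r x)
          (∫ s : Set.Icc (-τ) (0:ℝ), (∫ y, Kt (S t x) y ∂(μt (t + (s:ℝ)))) ∂ρ)
          (Set.Ici (0:ℝ)) t) ∧
      (∀ t, Measurable (S t)) ∧
      (∀ t : ℝ, 0 ≤ t → μt t = (μt 0).map (S t))) ∧
    -- and it is the unique such solution with this initial condition
    (∀ (ν : ℝ → Measure (Rd d)) (S' : ℝ → Rd d → Rd d),
      (∀ t, IsProbabilityMeasure (ν t)) →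
      (∀ t x, Integrable (fun y => Kt x y) (ν t)) →
      (∀ s : Set.Icc (-τ) (0:ℝ), ν (s:ℝ) = μt (s:ℝ)) →
      (∀ x, S' 0 x = x) →
      (∀ x, ∀ t : ℝ, 0 ≤ t →
        HasDerivWithinAt (fun r => S' r x)
          (∫ s : Set.Icc (-τ) (0:ℝ), (∫ y, Kt (S' t x) y ∂(ν (t + (s:ℝ)))) ∂ρ)
          (Set.Ici (0:ℝ)) t) →
      (∀ t, Measurable (S' t)) →
      (∀ t : ℝ, 0 ≤ t → ν t = (ν 0).map (S' t)) →
      ∀ t : ℝ, 0 ≤ t → ν t = μt t) := by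
  have h0 : -τ ≤ 0 := by linarith
  have hTf := hμ.isPathLaw h0 hKt hKdef hμt0 hμtneg
  have hflow (x : Rd d) (t : ℝ) (ht : 0 ≤ t) :=
    hμ.hasDerivWithinAt_delayedField h0 hL.le hKt hKdef hTf x ht
  refine ⟨fun t ht x => hμ.integral_eq_delayedField h0 hL.le hKt hKdef hTf ht x, ?_, ?_⟩
  · -- `Tf t` is only known to be measurable for `t ≥ 0`
    refine ⟨fun t => Tf (max t 0), fun x => by simp [hTf.flow_zero], fun x t ht => ?_,
      fun t => (hμ.continuous_flow hKt hKdef (le_max_right t 0)).measurable, fun t ht => ?_⟩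
    · simp only [max_eq_left ht]
      exact (hflow x t ht).congr (fun r hr => by simp only [max_eq_left (mem_Ici.1 hr)])
        (by simp only [max_eq_left ht])
    · simp only [max_eq_left ht]
      exact hTf.map_flow ht
  · intro ν S' _ _ hνinit hS'0 hS'd hS'm hνmap
    have hν : IsPathLaw h0 μin S' ν :=
      .of_history (fun s => by rw [hνinit, hTf.map_eval]) hνmap hS'0
        (fun x t ht => (hS'd x t ht).continuousWithinAt) fun u _ => hS'm u
    exact hν.eq_of_hasDerivWithinAt hTf hL hKt hμ.ae_norm_le hS'd hflow

theorem stmt19 {d : ℕ} (τ L R₀ : ℝ) (hτ : 0 < τ) (hL : 0 < L) (hR : 0 < R₀)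
    [MeasurableSpace (Hist τ d)] [BorelSpace (Hist τ d)]
    -- the path kernel K is given by averaging the point kernel K̃ against ρ
    (Kt : Rd d → Rd d → Rd d)
    (hKt : ∀ x x' y y', ‖Kt x y - Kt x' y'‖ ≤ L * (‖x - x'‖ + ‖y - y'‖))
    (ρ : Measure (Set.Icc (-τ) (0:ℝ))) [IsProbabilityMeasure ρ]
    (K : Rd d → Hist τ d → Rd d)
    (hKdef : ∀ x (σ : Hist τ d), K x σ = ∫ s, Kt x (σ s) ∂ρ)
    -- μ is the unique fixed-point solution with initial datum supported in B(0,R₀)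
    (μin : Measure (Hist τ d)) [IsProbabilityMeasure μin]
    (μ : ℝ → Measure (Hist τ d))
    (Tf : ℝ → Rd d → Rd d) (G : ℝ → Hist τ d → Hist τ d)
    (hμ : IsFixedPointSol τ R₀ K μin μ Tf G)
    -- μ̃(t) = ev(0) # μ(t) for t ≥ 0 and μ̃(s) = ev(s) # μ(0) for s ∈ [-τ,0]
    (μt : ℝ → Measure (Rd d))
    (hμtp : ∀ t, IsProbabilityMeasure (μt t))
    (hμt0 : ∀ t : ℝ, 0 ≤ t → ∀ z : Set.Icc (-τ) (0:ℝ), (z:ℝ) = 0 →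
      μt t = (μ t).map (fun σ : Hist τ d => σ z))
    (hμtneg : ∀ s : Set.Icc (-τ) (0:ℝ), μt (s:ℝ) = (μ 0).map (fun σ : Hist τ d => σ s))
    (hμti : ∀ t x, Integrable (fun y => Kt x y) (μt t)) :
    -- the vector fields F[μ] and F̃[μ̃] coincide
    (∀ t : ℝ, 0 ≤ t → ∀ x : Rd d,
      ∫ σ, K x σ ∂(μ t)
        = ∫ s : Set.Icc (-τ) (0:ℝ), (∫ y, Kt x y ∂(μt (t + (s:ℝ)))) ∂ρ) ∧
    -- μ̃ solves the transport equation : it is the push-forward along the flow of F̃[μ̃]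
    (∃ S : ℝ → Rd d → Rd d,
      (∀ x, S 0 x = x) ∧
      (∀ x, ∀ t : ℝ, 0 ≤ t →
        HasDerivWithinAt (fun r => S r x)
          (∫ s : Set.Icc (-τ) (0:ℝ), (∫ y, Kt (S t x) y ∂(μt (t + (s:ℝ)))) ∂ρ)
          (Set.Ici (0:ℝ)) t) ∧
      (∀ t, Measurable (S t)) ∧
      (∀ t : ℝ, 0 ≤ t → μt t = (μt 0).map (S t))) ∧
    -- and it is the unique such solution with this initial condition
    (∀ (ν : ℝ → Measure (Rd d)) (S' : ℝ → Rd d → Rd d),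
      (∀ t, IsProbabilityMeasure (ν t)) →
      (∀ t x, Integrable (fun y => Kt x y) (ν t)) →
      (∀ s : Set.Icc (-τ) (0:ℝ), ν (s:ℝ) = μt (s:ℝ)) →
      (∀ x, S' 0 x = x) →
      (∀ x, ∀ t : ℝ, 0 ≤ t →
        HasDerivWithinAt (fun r => S' r x)
          (∫ s : Set.Icc (-τ) (0:ℝ), (∫ y, Kt (S' t x) y ∂(ν (t + (s:ℝ)))) ∂ρ)
          (Set.Ici (0:ℝ)) t) →
      (∀ t, Measurable (S' t)) →
      (∀ t : ℝ, 0 ≤ t → ν t = (ν 0).map (S' t)) →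
      ∀ t : ℝ, 0 ≤ t → ν t = μt t) :=
  stmt19_general τ L R₀ hτ hL Kt hKt ρ K hKdef μin μ Tf G hμ μt hμt0 hμtneg
end
end
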